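/- arXiv:2011.12049 — 10 statements merged into one kernel-verified Lean document; each statement's English description precedes it below -/
import Mathlib

section
/- Let R be a finite commutative chain ring with maximal ideal γR, λ a non-invertible element of R, and S = R[x]/⟨x^n − λ⟩. Then the image of x in S is nilpotent with nilpotency index exactly n·e′, where e′ is the nilpotency index of λ. -/
open Polynomial

/-- If `f * (X^n - C lam) = C c * X^r` with `r < n` and `lam` nilpotent, then `c = 0`. -/
lemma aux_stmt5 {R : Type} [CommRing R] (lam : R) (n r : ℕ) (hr : r < n)
    (e' : ℕ) (hlame : lam ^ e' = 0) (f : Polynomial R) (c : R)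
    (h : f * (X ^ n - C lam) = C c * X ^ r) : c = 0 := by
  have key : ∀ i : ℕ, f.coeff i = lam * f.coeff (i + n) := by
    intro i
    have h' := congrArg (fun p => Polynomial.coeff p (i + n)) h
    simp only [mul_sub, Polynomial.coeff_sub, Polynomial.coeff_mul_X_pow,
      Polynomial.coeff_mul_C, Polynomial.coeff_C_mul, Polynomial.coeff_X_pow] at h'
    rw [if_neg (by omega)] at h'
    rw [mul_zero] at h'
    linear_combination h'
  have key2 : ∀ m i : ℕ, f.coeff i = lam ^ m * f.coeff (i + m * n) := by
    intro m
    induction m with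
    | zero => intro i; simp
    | succ m ih =>
      intro i
      rw [key i, ih (i + n), ← mul_assoc, ← pow_succ']
      ring_nf
  have hf0 : f = 0 := by
    ext i
    rw [key2 e' i, hlame, zero_mul, Polynomial.coeff_zero]
  rw [hf0, zero_mul] at h
  have := congrArg (fun p => Polynomial.coeff p r) h.symm
  simpa using this

/-- In `S = R[x]/⟨x^n − λ⟩` with `λ` non-invertible of nilpotency
index `e′`, the image of `x` is nilpotent with nilpotency index exactly `n·e′`. -/
theorem stmt_5 {R : Type} [CommRing R] [Fintype R] [IsLocalRing R]
    (γ : R) (e : ℕ)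
    (hchain : ∀ I J : Ideal R, I ≤ J ∨ J ≤ I)
    (hmax : IsLocalRing.maximalIdeal R = Ideal.span {γ})
    (he : 0 < e) (hγe : γ ^ e = 0)
    (hγlt : ∀ k, 0 < k → k < e → γ ^ k ≠ 0)
    (lam : R) (hlam : ¬ IsUnit lam)
    (e' : ℕ) (he' : 0 < e') (hlame : lam ^ e' = 0)
    (hlamlt : ∀ k, 0 < k → k < e' → lam ^ k ≠ 0)
    (n : ℕ) (hn : 0 < n)
    (J : Ideal (Polynomial R))
    (hJ : J = Ideal.span {Polynomial.X ^ n - Polynomial.C lam}) :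
    (Ideal.Quotient.mk J Polynomial.X) ^ (n * e') = 0 ∧
    ∀ k < n * e', (Ideal.Quotient.mk J Polynomial.X) ^ k ≠ 0 := by
  have hgJ : (X : Polynomial R) ^ n - C lam ∈ J := by
    rw [hJ]; exact Ideal.subset_span rfl
  have hXn : Ideal.Quotient.mk J (X ^ n) = Ideal.Quotient.mk J (C lam) := by
    rw [Ideal.Quotient.eq]; exact hgJ
  constructor
  · have : (Ideal.Quotient.mk J Polynomial.X) ^ (n * e') =
        (Ideal.Quotient.mk J (C lam)) ^ e' := by
      rw [← map_pow, pow_mul, map_pow, hXn]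
    rw [this, ← map_pow, ← map_pow, hlame, map_zero, map_zero]
  · intro k hk h0
    set q := k / n with hq
    set r := k % n with hrdef
    have hr : r < n := Nat.mod_lt _ hn
    have hkeq : n * q + r = k := Nat.div_add_mod k n
    have hqe' : q < e' := by
      rw [hq, Nat.div_lt_iff_lt_mul hn, mul_comm]; exact hk
    have hrw : (Ideal.Quotient.mk J Polynomial.X) ^ k =
        Ideal.Quotient.mk J (C (lam ^ q) * X ^ r) := by
      have h1 : (C (lam ^ q) : Polynomial R) = (C lam) ^ q := by rw [map_pow]
      rw [h1, ← hkeq, pow_add, pow_mul, ← map_pow, hXn, map_mul, map_pow, map_pow]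
    rw [hrw, Ideal.Quotient.eq_zero_iff_mem, hJ, Ideal.mem_span_singleton] at h0
    obtain ⟨f, hf⟩ := h0
    have : lam ^ q = 0 := by
      refine aux_stmt5 lam n r hr e' hlame f (lam ^ q) ?_
      rw [mul_comm]
      exact hf.symm
    rcases Nat.eq_zero_or_pos q with hq0 | hq0
    · rw [hq0, pow_zero] at this
      exact one_ne_zero this
    · exact hlamlt q hq0 hqe' this
end

section
/- Let R be a finite commutative chain ring with maximal ideal γR and residue field F_q, λ a non-invertible element of R, n ≥ 1, and S = R[x]/⟨x^n − λ⟩. Then an element a ∈ S is non-invertible if and only if a ∈ ⟨γ, x⟩; consequently ⟨γ, x⟩ is the unique maximal ideal of S and S/⟨γ, x⟩ ≅ F_q. In particular, S is a finite local ring. -/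
/-!
Reducing modulo `⟨γ, x⟩` is taking the constant coefficient modulo `γ`, so
`S/⟨γ, x⟩ ≅ R/γR = F_q` and `⟨γ, x⟩` is maximal. Both generators are nilpotent in `S`:
`γ` because `γ^e = 0`, and `x` because `x^n = λ ∈ γR`. Hence `⟨γ, x⟩` lies in
the nilradical, so in every maximal ideal, and it is therefore the only one.
-/

open Polynomial

theorem Ideal.IsMaximal.eq_of_le_nilradical {A : Type*} [CommRing A] {I M : Ideal A}
    (hI : I.IsMaximal) (hInil : I ≤ nilradical A) (hM : M.IsMaximal) : M = I :=
  (hI.eq_of_le hM.ne_top (hInil.trans (nilradical_le_prime M))).symm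

namespace Polynomial

variable {R : Type*} [CommRing R]

theorem ker_mk_comp_constantCoeff (γ : R) :
    RingHom.ker ((Ideal.Quotient.mk (Ideal.span {γ})).comp constantCoeff) =
      Ideal.span {C γ, X} := by
  ext p
  simp only [RingHom.mem_ker, RingHom.comp_apply, Ideal.Quotient.eq_zero_iff_mem,
    Ideal.mem_span_singleton', Ideal.mem_span_pair, constantCoeff_apply]
  constructor
  · rintro ⟨d, hd⟩
    refine ⟨C d, p.divX, ?_⟩
    rw [← C_mul, hd, add_comm, divX_mul_X_add]
  · rintro ⟨a, b, rfl⟩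
    exact ⟨a.coeff 0, by simp⟩

theorem span_X_pow_sub_C_le_span_C_X {γ lam : R} (hlam : lam ∈ Ideal.span {γ}) {n : ℕ}
    (hn : 0 < n) : Ideal.span {X ^ n - C lam} ≤ Ideal.span {C γ, X} := by
  obtain ⟨c, rfl⟩ := Ideal.mem_span_singleton'.mp hlam
  rw [Ideal.span_singleton_le_iff_mem, C_mul]
  exact Ideal.sub_mem _ (Ideal.pow_mem_of_mem _ (Ideal.subset_span (by simp)) n hn)
    (Ideal.mul_mem_left _ _ (Ideal.subset_span (by simp)))

theorem map_mk_span_C_X (J : Ideal R[X]) (γ : R) :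
    (Ideal.span {C γ, X}).map (Ideal.Quotient.mk J) =
      Ideal.span {Ideal.Quotient.mk J (C γ), Ideal.Quotient.mk J X} := by
  rw [Ideal.map_span, Set.image_pair]

noncomputable def quotientSpanCXEquiv {J : Ideal R[X]} {γ : R}
    (hJ : J ≤ Ideal.span {C γ, X}) :
    (R[X] ⧸ J) ⧸ Ideal.span {Ideal.Quotient.mk J (C γ), Ideal.Quotient.mk J X} ≃+*
      R ⧸ Ideal.span {γ} :=
  (Ideal.quotEquivOfEq (map_mk_span_C_X J γ).symm).trans <|
    (DoubleQuot.quotQuotEquivQuotOfLE hJ).trans <|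
      (Ideal.quotEquivOfEq (ker_mk_comp_constantCoeff γ).symm).trans <|
        RingHom.quotientKerEquivOfSurjective fun r ↦ by
          obtain ⟨s, rfl⟩ := Ideal.Quotient.mk_surjective r
          exact ⟨C s, by simp⟩

theorem isNilpotent_mk_X_of_isNilpotent {lam : R} (hlam : IsNilpotent lam) (n : ℕ) :
    IsNilpotent (Ideal.Quotient.mk (Ideal.span {X ^ n - C lam}) X) := by
  obtain ⟨k, hk⟩ := hlam
  have hXn : Ideal.Quotient.mk (Ideal.span {X ^ n - C lam}) (X ^ n) =
      Ideal.Quotient.mk _ (C lam) :=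
    Ideal.Quotient.eq.mpr (Ideal.subset_span rfl)
  refine ⟨n * k, ?_⟩
  rw [pow_mul, ← map_pow, hXn, ← map_pow, ← C_pow, hk, C_0, map_zero]

theorem span_mk_C_X_le_nilradical {γ lam : R} (hγ : IsNilpotent γ)
    (hlam : lam ∈ Ideal.span {γ}) (n : ℕ) :
    Ideal.span {Ideal.Quotient.mk (Ideal.span {X ^ n - C lam}) (C γ),
      Ideal.Quotient.mk (Ideal.span {X ^ n - C lam}) X} ≤ nilradical _ := by
  obtain ⟨c, rfl⟩ := Ideal.mem_span_singleton'.mp hlam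
  rw [Ideal.span_le, Set.insert_subset_iff, Set.singleton_subset_iff]
  exact ⟨(hγ.map C).map _,
    isNilpotent_mk_X_of_isNilpotent ((Commute.all c γ).isNilpotent_mul_left hγ) n⟩

end Polynomial

theorem stmt_6_general {R : Type} [CommRing R] [IsLocalRing R]
    (γ : R) (e : ℕ)
    (hmax : IsLocalRing.maximalIdeal R = Ideal.span {γ})
    (hγe : γ ^ e = 0)
    (lam : R) (hlam : ¬ IsUnit lam)
    (n : ℕ) (hn : 0 < n)
    (J : Ideal (Polynomial R))
    (hJ : J = Ideal.span {Polynomial.X ^ n - Polynomial.C lam})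
    (I : Ideal (Polynomial R ⧸ J))
    (hI : I = Ideal.span
      {Ideal.Quotient.mk J (Polynomial.C γ), Ideal.Quotient.mk J Polynomial.X}) :
    (∀ a : Polynomial R ⧸ J, ¬ IsUnit a ↔ a ∈ I) ∧
    I.IsMaximal ∧
    (∀ M : Ideal (Polynomial R ⧸ J), M.IsMaximal → M = I) ∧
    Nonempty (((Polynomial R ⧸ J) ⧸ I) ≃+* (R ⧸ Ideal.span {γ})) ∧
    IsLocalRing (Polynomial R ⧸ J) := by
  subst hJ
  have hlam_mem : lam ∈ Ideal.span {γ} := hmax ▸ hlam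
  have hγmax : (Ideal.span {γ}).IsMaximal := hmax ▸ IsLocalRing.maximalIdeal.isMaximal R
  let equiv := quotientSpanCXEquiv (span_X_pow_sub_C_le_span_C_X hlam_mem hn)
  have hImax : I.IsMaximal := hI ▸ Ideal.Quotient.maximal_of_isField _
    (MulEquiv.isField ((Ideal.Quotient.maximal_ideal_iff_isField_quotient _).mp hγmax)
      equiv.toMulEquiv)
  have huniq : ∀ M, M.IsMaximal → M = I := fun M ↦
    hImax.eq_of_le_nilradical (hI ▸ span_mk_C_X_le_nilradical ⟨e, hγe⟩ hlam_mem n)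
  have hlocal := IsLocalRing.of_unique_max_ideal ⟨I, hImax, huniq⟩
  refine ⟨fun a ↦ ?_, hImax, huniq, ⟨hI ▸ equiv⟩, hlocal⟩
  rw [← huniq _ (IsLocalRing.maximalIdeal.isMaximal _), IsLocalRing.mem_maximalIdeal]
  rfl

/-- In `S = R[x]/⟨x^n − λ⟩` with `λ` non-invertible, an element is
non-invertible iff it lies in `⟨γ, x⟩`; `⟨γ, x⟩` is the unique maximal ideal of
`S`, `S/⟨γ, x⟩ ≅ F_q`, and `S` is a finite local ring. -/
theorem stmt_6 {R : Type} [CommRing R] [Fintype R] [IsLocalRing R]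
    (γ : R) (e : ℕ)
    (hchain : ∀ I J : Ideal R, I ≤ J ∨ J ≤ I)
    (hmax : IsLocalRing.maximalIdeal R = Ideal.span {γ})
    (he : 0 < e) (hγe : γ ^ e = 0)
    (hγlt : ∀ k, 0 < k → k < e → γ ^ k ≠ 0)
    (lam : R) (hlam : ¬ IsUnit lam)
    (n : ℕ) (hn : 0 < n)
    (J : Ideal (Polynomial R))
    (hJ : J = Ideal.span {Polynomial.X ^ n - Polynomial.C lam})
    (I : Ideal (Polynomial R ⧸ J))
    (hI : I = Ideal.span
      {Ideal.Quotient.mk J (Polynomial.C γ), Ideal.Quotient.mk J Polynomial.X}) :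
    (∀ a : Polynomial R ⧸ J, ¬ IsUnit a ↔ a ∈ I) ∧
    I.IsMaximal ∧
    (∀ M : Ideal (Polynomial R ⧸ J), M.IsMaximal → M = I) ∧
    Nonempty (((Polynomial R ⧸ J) ⧸ I) ≃+* (R ⧸ Ideal.span {γ})) ∧
    IsLocalRing (Polynomial R ⧸ J) :=
  stmt_6_general γ e hmax hγe lam hlam n hn J hJ I hI
end

section
/- Let R be a finite commutative chain ring with maximal ideal γR of nilpotency index e, λ a non-invertible element of R, n ≥ 1, and S = R[x]/⟨x^n − λ⟩. The maximal ideal ⟨γ, x⟩ of S is principal if and only if e = 1, or n = 1, or (e > 1, n > 1, and λ ∈ γR \ γ²R). -/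
open Polynomial TrivSqZeroExt

set_option maxHeartbeats 1000000
set_option synthInstance.maxHeartbeats 400000

section Aux

variable {R : Type} [CommRing R] [IsLocalRing R]

/-- In a local ring, if `γ` is a nonunit with `γ ≠ 0` then `γ ∉ (γ²)`. -/
lemma aux_gamma_not_mem_sq (γ : R) (hγu : ¬ IsUnit γ) (hγ0 : γ ≠ 0) :
    γ ∉ Ideal.span ({γ ^ 2} : Set R) := by
  intro h
  rw [Ideal.mem_span_singleton'] at h
  obtain ⟨r, hr⟩ := h
  have h1 : γ * (1 - r * γ) = 0 := by ring_nf; linear_combination -hr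
  have hu : IsUnit (1 - r * γ) := by
    apply IsLocalRing.isUnit_one_sub_self_of_mem_nonunits
    intro hc
    exact hγu (isUnit_of_mul_isUnit_right hc)
  obtain ⟨u, hu⟩ := hu
  have h2 : γ * ↑u = 0 := by rw [hu]; exact h1
  have h3 : γ = γ * ↑u * ↑u⁻¹ := by rw [mul_assoc, Units.mul_inv, mul_one]
  exact hγ0 (by rw [h3, h2, zero_mul])

/-- Multiplication formula for second components of dual numbers over a
commutative ring. -/
lemma aux_dn_snd_mul {A : Type} [CommRing A] (x y : DualNumber A) :
    (x * y).snd = x.fst * y.snd + y.fst * x.snd := by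
  simp [TrivSqZeroExt.snd_mul, smul_eq_mul, mul_comm]

end Aux

/-- The maximal ideal `⟨γ, x⟩` of `S = R[x]/⟨x^n − λ⟩` is principal
iff `e = 1`, or `n = 1`, or (`e > 1`, `n > 1` and `λ ∈ γR \ γ²R`). -/
theorem stmt_7 {R : Type} [CommRing R] [Fintype R] [IsLocalRing R]
    (γ : R) (e : ℕ)
    (hchain : ∀ I J : Ideal R, I ≤ J ∨ J ≤ I)
    (hmax : IsLocalRing.maximalIdeal R = Ideal.span {γ})
    (he : 0 < e) (hγe : γ ^ e = 0)
    (hγlt : ∀ k, 0 < k → k < e → γ ^ k ≠ 0)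
    (lam : R) (hlam : ¬ IsUnit lam)
    (n : ℕ) (hn : 0 < n)
    (J : Ideal (Polynomial R))
    (hJ : J = Ideal.span {Polynomial.X ^ n - Polynomial.C lam})
    (I : Ideal (Polynomial R ⧸ J))
    (hI : I = Ideal.span
      {Ideal.Quotient.mk J (Polynomial.C γ), Ideal.Quotient.mk J Polynomial.X}) :
    I.IsPrincipal ↔
      (e = 1 ∨ n = 1 ∨
        (1 < e ∧ 1 < n ∧ lam ∈ Ideal.span {γ} ∧ lam ∉ Ideal.span {γ ^ 2})) := by
  -- basic facts
  have hγu : ¬ IsUnit γ := by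
    intro h
    have hγm : γ ∈ IsLocalRing.maximalIdeal R := by
      rw [hmax]; exact Ideal.mem_span_singleton_self γ
    exact (IsLocalRing.maximalIdeal.isMaximal R).ne_top
      (Ideal.eq_top_of_isUnit_mem _ hγm h)
  have hlamγ : lam ∈ Ideal.span ({γ} : Set R) := by
    rw [← hmax]; exact hlam
  -- `mk J (C lam) = (mk J X)^n`
  have hXn : (Ideal.Quotient.mk J Polynomial.X) ^ n
      = Ideal.Quotient.mk J (Polynomial.C lam) := by
    rw [← map_pow, ← sub_eq_zero, ← map_sub, Ideal.Quotient.eq_zero_iff_mem, hJ]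
    exact Ideal.subset_span rfl
  constructor
  · -- hard direction
    intro hP
    by_contra hR
    push_neg at hR
    obtain ⟨he1, hn1, hR3⟩ := hR
    have he' : 1 < e := lt_of_le_of_ne he (Ne.symm he1)
    have hn' : 1 < n := lt_of_le_of_ne hn (Ne.symm hn1)
    have hlam2 : lam ∈ Ideal.span ({γ ^ 2} : Set R) := hR3 he' hn' hlamγ
    have hγ0 : γ ≠ 0 := by simpa using hγlt 1 one_pos he'
    have hγsq : γ ∉ Ideal.span ({γ ^ 2} : Set R) := aux_gamma_not_mem_sq γ hγu hγ0
    -- Set up the quotient ring `A = R/(γ²)` and the map `R[x]/J → A[ε]`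
    set K : Ideal R := Ideal.span {γ ^ 2} with hK
    set A := R ⧸ K with hA
    set f : R →+* DualNumber A :=
      (TrivSqZeroExt.inlHom A A).comp (Ideal.Quotient.mk K) with hf
    set φ : Polynomial R →+* DualNumber A := Polynomial.eval₂RingHom f DualNumber.eps with hφ
    have hεn : (DualNumber.eps : DualNumber A) ^ n = 0 := by
      obtain ⟨m, rfl⟩ : ∃ m, n = m + 2 := ⟨n - 2, by omega⟩
      rw [pow_add, pow_two, DualNumber.eps_mul_eps, mul_zero]
    have hker : ∀ p ∈ J, φ p = 0 := by
      intro p hp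
      rw [hJ, Ideal.mem_span_singleton] at hp
      obtain ⟨q, rfl⟩ := hp
      rw [φ.map_mul]
      have hz : φ (Polynomial.X ^ n - Polynomial.C lam) = 0 := by
        rw [φ.map_sub, φ.map_pow]
        simp only [hφ, Polynomial.coe_eval₂RingHom, Polynomial.eval₂_X, Polynomial.eval₂_C]
        rw [hεn, hf]
        simp only [RingHom.comp_apply]
        rw [Ideal.Quotient.eq_zero_iff_mem.mpr hlam2]
        simp
      rw [hz, zero_mul]
    set ψ : (Polynomial R ⧸ J) →+* DualNumber A := Ideal.Quotient.lift J φ hker with hψ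
    have hψC : ∀ r : R, ψ (Ideal.Quotient.mk J (Polynomial.C r))
        = TrivSqZeroExt.inl (Ideal.Quotient.mk K r) := by
      intro r
      rw [hψ, Ideal.Quotient.lift_mk]
      simp [hφ, hf]
    have hψX : ψ (Ideal.Quotient.mk J Polynomial.X) = DualNumber.eps := by
      rw [hψ, Ideal.Quotient.lift_mk]
      simp [hφ]
    -- the generator
    obtain ⟨g, hg⟩ := hP
    rw [Ideal.submodule_span_eq] at hg
    have hγI : Ideal.Quotient.mk J (Polynomial.C γ) ∈ I := by
      rw [hI]; exact Ideal.subset_span (Set.mem_insert _ _)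
    have hXI : Ideal.Quotient.mk J Polynomial.X ∈ I := by
      rw [hI]; exact Ideal.subset_span (Set.mem_insert_of_mem _ rfl)
    have hgI : g ∈ I := by
      rw [hg]; exact Ideal.mem_span_singleton_self g
    rw [hg, Ideal.mem_span_singleton'] at hγI hXI
    obtain ⟨a, ha⟩ := hγI
    obtain ⟨b, hb⟩ := hXI
    rw [hI, Ideal.mem_span_pair] at hgI
    obtain ⟨c, d, hcd⟩ := hgI
    -- push to `A[ε]`
    set G : A := Ideal.Quotient.mk K γ with hG
    have hG0 : G ≠ 0 := by
      rw [hG, Ne, Ideal.Quotient.eq_zero_iff_mem]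
      exact hγsq
    have hG2 : G * G = 0 := by
      rw [hG, ← map_mul, ← pow_two, Ideal.Quotient.eq_zero_iff_mem]
      exact Ideal.mem_span_singleton_self _
    have hEa : ψ a * ψ g = TrivSqZeroExt.inl G := by
      rw [← ψ.map_mul, ha, hψC]
    have hEb : ψ b * ψ g = DualNumber.eps := by
      rw [← ψ.map_mul, hb, hψX]
    have hEc : ψ c * TrivSqZeroExt.inl G + ψ d * DualNumber.eps = ψ g := by
      rw [← hψC, ← hψX, ← ψ.map_mul, ← ψ.map_mul, ← ψ.map_add, hcd]
    -- component equations
    set t1 : A := (ψ g).fst with ht1d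
    set t2 : A := (ψ g).snd with ht2d
    set a1 : A := (ψ a).fst with ha1
    set a2 : A := (ψ a).snd with ha2
    set b1 : A := (ψ b).fst with hb1
    set b2 : A := (ψ b).snd with hb2
    set c1 : A := (ψ c).fst with hc1
    have ht1 : t1 = c1 * G := by
      have h := congrArg TrivSqZeroExt.fst hEc
      simpa [TrivSqZeroExt.fst_mul, TrivSqZeroExt.fst_add, TrivSqZeroExt.fst_inl,
        DualNumber.fst_eps] using h.symm
    have hE3 : a1 * t1 = G := by
      have h := congrArg TrivSqZeroExt.fst hEa
      simpa [TrivSqZeroExt.fst_mul, TrivSqZeroExt.fst_inl] using h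
    have hE4 : a1 * t2 + t1 * a2 = 0 := by
      have h := congrArg TrivSqZeroExt.snd hEa
      rw [aux_dn_snd_mul] at h
      simpa [TrivSqZeroExt.snd_inl] using h
    have hE1 : b1 * t2 + t1 * b2 = 1 := by
      have h := congrArg TrivSqZeroExt.snd hEb
      rw [aux_dn_snd_mul] at h
      simpa [DualNumber.snd_eps] using h
    -- derive contradiction
    rw [ht1] at hE3 hE4 hE1
    have hGt2 : G * t2 = 0 := by
      linear_combination (-t2) * hE3 + (c1 * G) * hE4 - c1 ^ 2 * a2 * hG2
    have hfinal : G = 0 := by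
      linear_combination (-G) * hE1 + b1 * hGt2 + c1 * b2 * hG2
    exact hG0 hfinal
  · -- easy direction
    intro h
    rcases h with h1 | h1 | ⟨he', hn', hl1, hl2⟩
    · -- e = 1 : γ = 0
      have hγ0 : γ = 0 := by simpa [h1] using hγe
      refine ⟨Ideal.Quotient.mk J Polynomial.X, ?_⟩
      rw [hI, Ideal.submodule_span_eq, hγ0]
      simp only [Polynomial.C_0, map_zero]
      exact Submodule.span_insert_zero
    · -- n = 1 : mk X = mk (C lam) ∈ (mk (C γ))
      refine ⟨Ideal.Quotient.mk J (Polynomial.C γ), ?_⟩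
      rw [hI, Ideal.submodule_span_eq]
      apply le_antisymm
      · rw [Ideal.span_le]
        rintro z (rfl | rfl)
        · exact Ideal.mem_span_singleton_self _
        · rw [SetLike.mem_coe, Ideal.mem_span_singleton]
          obtain ⟨r, hr⟩ := Ideal.mem_span_singleton'.mp hlamγ
          refine ⟨Ideal.Quotient.mk J (Polynomial.C r), ?_⟩
          have hXlam : Ideal.Quotient.mk J Polynomial.X
              = Ideal.Quotient.mk J (Polynomial.C lam) := by
            rw [← hXn, h1, pow_one]
          rw [hXlam, ← hr, Polynomial.C_mul, map_mul]
          exact mul_comm _ _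
      · rw [Ideal.span_le]
        rintro z rfl
        exact Ideal.subset_span (Set.mem_insert _ _)
    · -- λ = (unit)·γ : generator mk X
      obtain ⟨r, hr⟩ := Ideal.mem_span_singleton'.mp hl1
      have hru : IsUnit r := by
        by_contra hru
        apply hl2
        have hrm : r ∈ Ideal.span ({γ} : Set R) := by rw [← hmax]; exact hru
        obtain ⟨s, hs⟩ := Ideal.mem_span_singleton'.mp hrm
        rw [Ideal.mem_span_singleton']
        exact ⟨s, by rw [← hr, ← hs]; ring⟩
      obtain ⟨u, hu⟩ := hru.exists_left_inv
      refine ⟨Ideal.Quotient.mk J Polynomial.X, ?_⟩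
      rw [hI, Ideal.submodule_span_eq]
      apply le_antisymm
      · rw [Ideal.span_le]
        rintro z (rfl | rfl)
        · rw [SetLike.mem_coe, Ideal.mem_span_singleton]
          have hγlam : γ = u * lam := by rw [← hr, ← mul_assoc, hu, one_mul]
          have hC : Ideal.Quotient.mk J (Polynomial.C γ)
              = Ideal.Quotient.mk J (Polynomial.C u)
                * (Ideal.Quotient.mk J Polynomial.X) ^ n := by
            rw [hγlam, Polynomial.C_mul, map_mul, hXn]
          rw [hC]
          exact dvd_mul_of_dvd_right (dvd_pow_self _ (by omega)) _
        · exact Ideal.mem_span_singleton_self _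
      · rw [Ideal.span_le]
        rintro z rfl
        exact Ideal.subset_span (Set.mem_insert_of_mem _ rfl)
end

section
/- Let R be a finite commutative chain ring with maximal ideal γR of nilpotency index e > 1, let n > 1, and let λ ∈ γR \ γ²R. Then S = R[x]/⟨x^n − λ⟩ is a finite chain ring with maximal ideal ⟨x⟩, the nilpotency index of x in S is ne, and the ideals of S are exactly ⟨x^i⟩ for 0 ≤ i ≤ ne, with |⟨x^i⟩| = q^{ne − i} where q is the residue field size of R. -/
/-!
Write `x` for the class of `X`. As `λ` is associated to `γ`, the relation `xⁿ = λ` puts `γ`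
in `⟨x⟩`; since every element of `S` is `a + x t` with `a ∈ R`, every element outside `⟨x⟩` is
a unit plus a nilpotent, so `⟨x⟩` is the unique maximal ideal. Reducing modulo the monic
`Xⁿ - λ`, the power `x^k = λ^(k / n) x^(k % n)` vanishes exactly when `k ≥ ne`. In a ring whose
maximal ideal is generated by a nilpotent `x`, every nonzero element is a unit times a power of
`x`, so the ideals are the `⟨x^i⟩`; and `a ↦ a x^i` identifies the residue field of `R` with
`⟨x^i⟩/⟨x^(i+1)⟩`, which gives the cardinalities.
-/

open Polynomial IsLocalRing

theorem associated_of_mem_span_of_notMem_span_sq {R : Type*} [CommRing R] [IsLocalRing R]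
    {γ lam : R} (hmax : maximalIdeal R = Ideal.span {γ}) (h₁ : lam ∈ Ideal.span {γ})
    (h₂ : lam ∉ Ideal.span {γ ^ 2}) : Associated γ lam := by
  obtain ⟨b, rfl⟩ := Ideal.mem_span_singleton.mp h₁
  have hb : IsUnit b := by
    by_contra hb
    have : b ∈ Ideal.span {γ} := hmax ▸ (mem_maximalIdeal b).mpr hb
    obtain ⟨c, rfl⟩ := Ideal.mem_span_singleton.mp this
    exact h₂ (Ideal.mem_span_singleton.mpr ⟨c, by ring⟩)
  exact ⟨hb.unit, rfl⟩

section NilpotentGenerator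

variable {S : Type*} [CommRing S] {x : S}

theorem pow_eq_zero_of_pow_mem_span_pow_succ (hx : IsNilpotent x) {i : ℕ}
    (h : x ^ i ∈ Ideal.span {x ^ (i + 1)}) : x ^ i = 0 := by
  obtain ⟨t, ht⟩ := Ideal.mem_span_singleton'.mp h
  have hu : IsUnit (1 - x * t) := ((Commute.all x t).isNilpotent_mul_right hx).isUnit_one_sub
  refine hu.mul_left_eq_zero.mp ?_
  linear_combination -ht

theorem exists_isUnit_eq_mul_pow (hx : IsNilpotent x) (hloc : ∀ s ∉ Ideal.span {x}, IsUnit s)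
    {s : S} (hs : s ≠ 0) : ∃ u k, IsUnit u ∧ s = u * x ^ k := by
  classical
  obtain ⟨N, hN⟩ := hx
  have hex : ∃ k, s ∉ Ideal.span {x ^ (k + 1)} :=
    ⟨N, by simpa [pow_succ, hN, Ideal.mem_span_singleton] using hs⟩
  obtain ⟨k, hk, hk₁⟩ : ∃ k, s ∈ Ideal.span {x ^ k} ∧ s ∉ Ideal.span {x ^ (k + 1)} := by
    refine ⟨Nat.find hex, ?_, Nat.find_spec hex⟩
    rcases hfind : Nat.find hex with _ | m
    · simp
    · exact not_not.mp (Nat.find_min hex (hfind ▸ m.lt_succ_self))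
  obtain ⟨u, rfl⟩ := Ideal.mem_span_singleton'.mp hk
  refine ⟨u, k, hloc u fun hu => hk₁ ?_, rfl⟩
  obtain ⟨c, rfl⟩ := Ideal.mem_span_singleton'.mp hu
  exact Ideal.mem_span_singleton'.mpr ⟨c, by ring⟩

theorem exists_eq_span_pow {N : ℕ} (hN : x ^ N = 0) (hloc : ∀ s ∉ Ideal.span {x}, IsUnit s)
    (I : Ideal S) : ∃ i ≤ N, I = Ideal.span {x ^ i} := by
  classical
  have hex : ∃ k, x ^ k ∈ I := ⟨N, hN ▸ I.zero_mem⟩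
  refine ⟨Nat.find hex, Nat.find_min' hex (hN ▸ I.zero_mem), le_antisymm ?_ ?_⟩
  · intro s hs
    by_cases hs₀ : s = 0
    · simp [hs₀]
    obtain ⟨u, k, hu, rfl⟩ := exists_isUnit_eq_mul_pow ⟨N, hN⟩ hloc hs₀
    have hk : Nat.find hex ≤ k := Nat.find_min' hex ((I.unit_mul_mem_iff_mem hu).mp hs)
    exact Ideal.mem_span_singleton.mpr ((pow_dvd_pow x hk).mul_left u)
  · exact (Ideal.span_singleton_le_iff_mem I).mpr (Nat.find_spec hex)

theorem ideal_le_total {N : ℕ} (hN : x ^ N = 0) (hloc : ∀ s ∉ Ideal.span {x}, IsUnit s)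
    (I₁ I₂ : Ideal S) : I₁ ≤ I₂ ∨ I₂ ≤ I₁ := by
  obtain ⟨i, -, rfl⟩ := exists_eq_span_pow hN hloc I₁
  obtain ⟨j, -, rfl⟩ := exists_eq_span_pow hN hloc I₂
  simp only [Ideal.span_singleton_le_span_singleton]
  exact (le_total j i).imp (pow_dvd_pow x) (pow_dvd_pow x)

theorem le_span_of_ne_top (hloc : ∀ s ∉ Ideal.span {x}, IsUnit s) {I : Ideal S} (hI : I ≠ ⊤) :
    I ≤ Ideal.span {x} :=
  fun s hs => by_contra fun h => hI (Ideal.eq_top_of_isUnit_mem I hs (hloc s h))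

theorem isMaximal_span [Nontrivial S] (hx : IsNilpotent x)
    (hloc : ∀ s ∉ Ideal.span {x}, IsUnit s) : (Ideal.span {x}).IsMaximal := by
  refine Ideal.isMaximal_def.mpr ⟨Ideal.span_singleton_eq_top.not.mpr hx.not_isUnit, ?_⟩
  intro I hlt
  by_contra hI
  exact hlt.not_ge (le_span_of_ne_top hloc hI)

end NilpotentGenerator

section Algebra

variable {R S : Type*} [CommRing R] [CommRing S] [Algebra R S] {x : S}

theorem isUnit_of_notMem_span [IsLocalRing R] (hx : IsNilpotent x)
    (hm : ∀ a ∈ maximalIdeal R, algebraMap R S a ∈ Ideal.span {x})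
    (hgen : ∀ t : S, ∃ a : R, t - algebraMap R S a ∈ Ideal.span {x})
    {s : S} (hs : s ∉ Ideal.span {x}) : IsUnit s := by
  obtain ⟨a, ha⟩ := hgen s
  have hu : IsUnit a := notMem_maximalIdeal.mp fun h =>
    hs (by simpa using Ideal.add_mem _ ha (hm a h))
  obtain ⟨c, hc⟩ := Ideal.mem_span_singleton'.mp ha
  have hnil : IsNilpotent (s - algebraMap R S a) := hc ▸ (Commute.all c x).isNilpotent_mul_left hx
  simpa using hnil.isUnit_add_left_of_commute (hu.map (algebraMap R S)) (Commute.all _ _)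

theorem algebraMap_mul_pow_mem_span_pow_succ_iff [IsLocalRing R] (hx : IsNilpotent x)
    (hm : ∀ a ∈ maximalIdeal R, algebraMap R S a ∈ Ideal.span {x}) {i : ℕ} (hi : x ^ i ≠ 0)
    (a : R) : algebraMap R S a * x ^ i ∈ Ideal.span {x ^ (i + 1)} ↔ a ∈ maximalIdeal R := by
  constructor
  · intro h
    by_contra ha
    have hu : IsUnit (algebraMap R S a) := (notMem_maximalIdeal.mp ha).map _
    exact hi (pow_eq_zero_of_pow_mem_span_pow_succ hx ((Ideal.unit_mul_mem_iff_mem _ hu).mp h))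
  · intro ha
    obtain ⟨c, hc⟩ := Ideal.mem_span_singleton'.mp (hm a ha)
    exact Ideal.mem_span_singleton'.mpr ⟨c, by rw [← hc]; ring⟩

theorem card_span_pow_eq_card_quotient_mul (I : Ideal R)
    (hgen : ∀ t : S, ∃ a : R, t - algebraMap R S a ∈ Ideal.span {x}) (i : ℕ)
    (hker : ∀ a : R, algebraMap R S a * x ^ i ∈ Ideal.span {x ^ (i + 1)} ↔ a ∈ I) :
    Nat.card (Ideal.span {x ^ i}) = Nat.card (R ⧸ I) * Nat.card (Ideal.span {x ^ (i + 1)}) := by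
  set M : Submodule R S := (Ideal.span {x ^ i}).restrictScalars R
  set M₁ : Submodule R S := (Ideal.span {x ^ (i + 1)}).restrictScalars R
  have hle : M₁ ≤ M := Ideal.span_singleton_le_span_singleton.mpr (pow_dvd_pow x i.le_succ)
  set K : Submodule R M := M₁.comap M.subtype
  have hxi : x ^ i ∈ M := Ideal.mem_span_singleton_self _
  set φ : R →ₗ[R] M := LinearMap.toSpanSingleton R M ⟨x ^ i, hxi⟩
  have hφ (a : R) : (φ a : S) = algebraMap R S a * x ^ i := Algebra.smul_def a (x ^ i)
  have hsurj : Function.Surjective (K.mkQ ∘ₗ φ) := by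
    rintro ⟨⟨s, hs⟩⟩
    obtain ⟨t, rfl⟩ := Ideal.mem_span_singleton'.mp hs
    obtain ⟨a, ha⟩ := hgen t
    obtain ⟨c, hc⟩ := Ideal.mem_span_singleton'.mp ha
    refine ⟨a, (Submodule.Quotient.eq K).mpr ?_⟩
    show (φ a : S) - t * x ^ i ∈ M₁
    exact Ideal.mem_span_singleton'.mpr ⟨-c, by rw [hφ]; linear_combination -(x ^ i * hc)⟩
  have hker' : I = LinearMap.ker (K.mkQ ∘ₗ φ) := by
    ext a
    rw [LinearMap.mem_ker, LinearMap.comp_apply, Submodule.mkQ_apply,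
      Submodule.Quotient.mk_eq_zero, ← hker a, ← hφ]
    rfl
  have e : (R ⧸ I) ≃ₗ[R] (M ⧸ K) :=
    (Submodule.quotEquivOfEq _ _ hker').trans ((K.mkQ ∘ₗ φ).quotKerEquivOfSurjective hsurj)
  calc Nat.card M = Nat.card K * Nat.card (M ⧸ K) := K.card_eq_card_quotient_mul_card
    _ = Nat.card M₁ * Nat.card (R ⧸ I) := by
      rw [Nat.card_congr (Submodule.comapSubtypeEquivOfLe hle).toEquiv,
        Nat.card_congr e.toEquiv]
    _ = _ := mul_comm _ _

theorem card_span_pow [IsLocalRing R]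
    (hm : ∀ a ∈ maximalIdeal R, algebraMap R S a ∈ Ideal.span {x})
    (hgen : ∀ t : S, ∃ a : R, t - algebraMap R S a ∈ Ideal.span {x})
    {N : ℕ} (hN : x ^ N = 0) (hlt : ∀ k < N, x ^ k ≠ 0) {i : ℕ} (hi : i ≤ N) :
    Nat.card (Ideal.span {x ^ i}) = Nat.card (R ⧸ maximalIdeal R) ^ (N - i) := by
  obtain ⟨j, rfl⟩ := Nat.exists_eq_add_of_le hi
  induction j generalizing i with
  | zero =>
    rw [add_zero] at hN
    simp [hN]
  | succ j ih =>
    have hi₁ : x ^ i ≠ 0 := hlt i (by omega)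
    rw [card_span_pow_eq_card_quotient_mul _ hgen i
        (algebraMap_mul_pow_mem_span_pow_succ_iff ⟨_, hN⟩ hm hi₁),
      ih (by convert hN using 2; omega) (fun k hk => hlt k (by omega)) (by omega)]
    simp [pow_succ']

end Algebra

section PolynomialQuotient

variable {R : Type*} [CommRing R]

theorem exists_sub_algebraMap_mem_span_mk_X (J : Ideal R[X]) (t : R[X] ⧸ J) :
    ∃ a : R, t - algebraMap R _ a ∈ Ideal.span {Ideal.Quotient.mk J X} := by
  obtain ⟨p, rfl⟩ := Ideal.Quotient.mk_surjective t
  refine ⟨p.coeff 0, Ideal.mem_span_singleton'.mpr ⟨Ideal.Quotient.mk J p.divX, ?_⟩⟩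
  rw [← Ideal.Quotient.mk_algebraMap, algebraMap_eq, ← map_mul, mul_comm, ← map_sub,
    eq_sub_of_add_eq (X_mul_divX_add p)]

variable {lam : R} {n : ℕ}

theorem mk_X_pow_eq_algebraMap {J : Ideal R[X]} (h : X ^ n - C lam ∈ J) :
    Ideal.Quotient.mk J X ^ n = algebraMap R _ lam := by
  rw [← map_pow, ← Ideal.Quotient.mk_algebraMap, algebraMap_eq, ← sub_eq_zero, ← map_sub,
    Ideal.Quotient.eq_zero_iff_mem]
  exact h

theorem mk_X_pow_eq {J : Ideal R[X]} (h : X ^ n - C lam ∈ J) (k : ℕ) :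
    Ideal.Quotient.mk J X ^ k =
      algebraMap R _ (lam ^ (k / n)) * Ideal.Quotient.mk J X ^ (k % n) := by
  conv_lhs => rw [← Nat.div_add_mod k n, pow_add, pow_mul, mk_X_pow_eq_algebraMap h, ← map_pow]

theorem algebraMap_mem_span_mk_X {J : Ideal R[X]} (h : X ^ n - C lam ∈ J) (hn : n ≠ 0) {a : R}
    (ha : a ∈ Ideal.span {lam}) : algebraMap R _ a ∈ Ideal.span {Ideal.Quotient.mk J X} := by
  obtain ⟨c, rfl⟩ := Ideal.mem_span_singleton'.mp ha
  rw [map_mul, ← mk_X_pow_eq_algebraMap h]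
  exact Ideal.mul_mem_left _ _ (Ideal.pow_mem_of_mem _ (Ideal.mem_span_singleton_self _) n
    (Nat.pos_of_ne_zero hn))

theorem mk_X_pow_ne_zero [Nontrivial R] (hn : n ≠ 0) {k : ℕ} (hk : lam ^ (k / n) ≠ 0) :
    Ideal.Quotient.mk (Ideal.span {X ^ n - C lam}) X ^ k ≠ 0 := by
  rw [mk_X_pow_eq (Ideal.mem_span_singleton_self _), ← Ideal.Quotient.mk_algebraMap,
    algebraMap_eq, ← map_pow, ← map_mul, Ne, Ideal.Quotient.eq_zero_iff_mem,
    Ideal.mem_span_singleton]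
  refine (monic_X_pow_sub_C lam hn).not_dvd_of_degree_lt ?_ ?_
  · intro h
    have hdeg := degree_C_mul_X_pow (k % n) hk
    rw [h, degree_zero] at hdeg
    exact WithBot.bot_ne_coe hdeg
  · rw [degree_X_pow_sub_C (Nat.pos_of_ne_zero hn), degree_C_mul_X_pow _ hk]
    exact_mod_cast Nat.mod_lt k (Nat.pos_of_ne_zero hn)

end PolynomialQuotient

theorem stmt_8_general {R : Type} [CommRing R] [IsLocalRing R]
    (γ : R) (e : ℕ)
    (hmax : IsLocalRing.maximalIdeal R = Ideal.span {γ})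
    (hγe : γ ^ e = 0)
    (hγlt : ∀ k, 0 < k → k < e → γ ^ k ≠ 0)
    (lam : R) (hlam1 : lam ∈ Ideal.span {γ}) (hlam2 : lam ∉ Ideal.span {γ ^ 2})
    (n : ℕ) (hn : 1 < n)
    (J : Ideal (Polynomial R))
    (hJ : J = Ideal.span {Polynomial.X ^ n - Polynomial.C lam}) :
    (∀ I₁ I₂ : Ideal (Polynomial R ⧸ J), I₁ ≤ I₂ ∨ I₂ ≤ I₁) ∧
    (Ideal.span {Ideal.Quotient.mk J Polynomial.X}).IsMaximal ∧
    (∀ I : Ideal (Polynomial R ⧸ J), I ≠ ⊤ →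
      I ≤ Ideal.span {Ideal.Quotient.mk J Polynomial.X}) ∧
    (Ideal.Quotient.mk J Polynomial.X) ^ (n * e) = 0 ∧
    (∀ k < n * e, (Ideal.Quotient.mk J Polynomial.X) ^ k ≠ 0) ∧
    (∀ I : Ideal (Polynomial R ⧸ J),
      ∃ i ≤ n * e, I = Ideal.span {(Ideal.Quotient.mk J Polynomial.X) ^ i}) ∧
    (∀ i ≤ n * e,
      Nat.card
        (Ideal.span {(Ideal.Quotient.mk J Polynomial.X) ^ i} :
          Ideal (Polynomial R ⧸ J)) =
        Nat.card (R ⧸ Ideal.span {γ}) ^ (n * e - i)) := by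
  subst hJ
  have hn₀ : n ≠ 0 := by omega
  have hassoc := associated_of_mem_span_of_notMem_span_sq hmax hlam1 hlam2
  have hmax' : maximalIdeal R = Ideal.span {lam} := by
    obtain ⟨u, rfl⟩ := hassoc
    rw [hmax, Ideal.span_singleton_mul_right_unit u.isUnit]
  have hlam_lt (k : ℕ) (hk : k < e) : lam ^ k ≠ 0 := by
    rcases k.eq_zero_or_pos with rfl | hk₀
    · exact pow_zero lam ▸ one_ne_zero
    · exact (hassoc.pow_pow.eq_zero_iff).not.mp (hγlt k hk₀ hk)
  have hmem : X ^ n - C lam ∈ Ideal.span {X ^ n - C lam} := Ideal.mem_span_singleton_self _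
  set x := Ideal.Quotient.mk (Ideal.span {X ^ n - C lam}) X
  have hxN : x ^ (n * e) = 0 := by
    rw [pow_mul, mk_X_pow_eq_algebraMap hmem, ← map_pow, (hassoc.pow_pow.eq_zero_iff).mp hγe,
      map_zero]
  have hxlt (k : ℕ) (hk : k < n * e) : x ^ k ≠ 0 :=
    mk_X_pow_ne_zero hn₀ (hlam_lt _ ((Nat.div_lt_iff_lt_mul (by omega)).mpr (by linarith)))
  have : Nontrivial (R[X] ⧸ Ideal.span {X ^ n - C lam}) :=
    nontrivial_of_ne _ _ (pow_zero x ▸ mk_X_pow_ne_zero hn₀ (by simp))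
  have hm (a : R) (ha : a ∈ maximalIdeal R) : algebraMap R _ a ∈ Ideal.span {x} :=
    algebraMap_mem_span_mk_X hmem hn₀ (hmax' ▸ ha)
  have hgen := exists_sub_algebraMap_mem_span_mk_X (Ideal.span {X ^ n - C lam})
  have hloc (s) (hs : s ∉ Ideal.span {x}) : IsUnit s := isUnit_of_notMem_span ⟨_, hxN⟩ hm hgen hs
  refine ⟨ideal_le_total hxN hloc, isMaximal_span ⟨_, hxN⟩ hloc, fun I => le_span_of_ne_top hloc,
    hxN, hxlt, exists_eq_span_pow hxN hloc, fun i hi => ?_⟩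
  rw [← hmax]
  exact card_span_pow hm hgen hxN hxlt hi

/-- If `e > 1`, `n > 1` and `λ ∈ γR \ γ²R`, then
`S = R[x]/⟨x^n − λ⟩` is a finite chain ring with maximal ideal `⟨x⟩`, the
nilpotency index of `x` in `S` is `ne`, the ideals of `S` are exactly the
`⟨x^i⟩` for `0 ≤ i ≤ ne`, and `|⟨x^i⟩| = q^{ne − i}`. -/
theorem stmt_8 {R : Type} [CommRing R] [Fintype R] [IsLocalRing R]
    (γ : R) (e : ℕ)
    (hchain : ∀ I J : Ideal R, I ≤ J ∨ J ≤ I)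
    (hmax : IsLocalRing.maximalIdeal R = Ideal.span {γ})
    (he : 1 < e) (hγe : γ ^ e = 0)
    (hγlt : ∀ k, 0 < k → k < e → γ ^ k ≠ 0)
    (lam : R) (hlam1 : lam ∈ Ideal.span {γ}) (hlam2 : lam ∉ Ideal.span {γ ^ 2})
    (n : ℕ) (hn : 1 < n)
    (J : Ideal (Polynomial R))
    (hJ : J = Ideal.span {Polynomial.X ^ n - Polynomial.C lam}) :
    (∀ I₁ I₂ : Ideal (Polynomial R ⧸ J), I₁ ≤ I₂ ∨ I₂ ≤ I₁) ∧
    (Ideal.span {Ideal.Quotient.mk J Polynomial.X}).IsMaximal ∧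
    (∀ I : Ideal (Polynomial R ⧸ J), I ≠ ⊤ →
      I ≤ Ideal.span {Ideal.Quotient.mk J Polynomial.X}) ∧
    (Ideal.Quotient.mk J Polynomial.X) ^ (n * e) = 0 ∧
    (∀ k < n * e, (Ideal.Quotient.mk J Polynomial.X) ^ k ≠ 0) ∧
    (∀ I : Ideal (Polynomial R ⧸ J),
      ∃ i ≤ n * e, I = Ideal.span {(Ideal.Quotient.mk J Polynomial.X) ^ i}) ∧
    (∀ i ≤ n * e,
      Nat.card
        (Ideal.span {(Ideal.Quotient.mk J Polynomial.X) ^ i} :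
          Ideal (Polynomial R ⧸ J)) =
        Nat.card (R ⧸ Ideal.span {γ}) ^ (n * e - i)) :=
  stmt_8_general γ e hmax hγe hγlt lam hlam1 hlam2 n hn J hJ
end

section
/- Let R be a finite commutative chain ring with maximal ideal γR of nilpotency index e > 1, let n > 1, and let λ ∈ γ²R. Then S = R[x]/⟨x^n − λ⟩ is a finite local ring with maximal ideal ⟨γ, x⟩ which is not principal; in particular, S is not a chain ring. -/
open Polynomial

private lemma coeff_one_mul'' {R : Type} [CommRing R] (p q : R[X]) :
    (p*q).coeff 1 = p.coeff 0 * q.coeff 1 + p.coeff 1 * q.coeff 0 := by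
  rw [Polynomial.coeff_mul]
  simp [Finset.Nat.antidiagonal_succ, Prod.map]

/-- If `e > 1`, `n > 1` and `λ ∈ γ²R`, then `S = R[x]/⟨x^n − λ⟩`
is a finite local ring with maximal ideal `⟨γ, x⟩` which is not principal; in
particular `S` is not a chain ring. -/
theorem stmt_9 {R : Type} [CommRing R] [Fintype R] [IsLocalRing R]
    (γ : R) (e : ℕ)
    (hchain : ∀ I J : Ideal R, I ≤ J ∨ J ≤ I)
    (hmax : IsLocalRing.maximalIdeal R = Ideal.span {γ})
    (he : 1 < e) (hγe : γ ^ e = 0)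
    (hγlt : ∀ k, 0 < k → k < e → γ ^ k ≠ 0)
    (lam : R) (hlam : lam ∈ Ideal.span {γ ^ 2})
    (n : ℕ) (hn : 1 < n)
    (J : Ideal (Polynomial R))
    (hJ : J = Ideal.span {Polynomial.X ^ n - Polynomial.C lam})
    (I : Ideal (Polynomial R ⧸ J))
    (hI : I = Ideal.span
      {Ideal.Quotient.mk J (Polynomial.C γ), Ideal.Quotient.mk J Polynomial.X}) :
    IsLocalRing (Polynomial R ⧸ J) ∧
    I.IsMaximal ∧
    ¬ I.IsPrincipal ∧
    ¬ (∀ I₁ I₂ : Ideal (Polynomial R ⧸ J), I₁ ≤ I₂ ∨ I₂ ≤ I₁) := by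
  have hγ1 : γ ≠ 0 := by simpa using hγlt 1 one_pos he
  have hone : (1 : R) ∉ Ideal.span {γ} := by
    intro h
    exact (IsLocalRing.maximalIdeal.isMaximal R).ne_top
      (by rw [hmax]; exact (Ideal.eq_top_iff_one _).2 h)
  have hle : Ideal.span {γ^2} ≤ Ideal.span {γ} :=
    Ideal.span_singleton_le_span_singleton.2 (dvd_pow_self γ (by norm_num))
  have hunit : ∀ r : R, r ∉ Ideal.span {γ} → IsUnit r := by
    intro r hr
    by_contra hu
    exact hr (hmax ▸ (IsLocalRing.mem_maximalIdeal r).2 hu)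
  have L1 : ∀ r : R, r * γ ∈ Ideal.span {γ^2} → r ∈ Ideal.span {γ} := by
    intro r hr
    obtain ⟨s, hs⟩ := Ideal.mem_span_singleton'.1 hr
    by_contra hrg
    have hrs : r - s * γ ∉ Ideal.span {γ} := by
      intro h
      apply hrg
      have h2 := Ideal.add_mem _ h
        (Ideal.mul_mem_left _ s (Ideal.mem_span_singleton_self γ))
      simpa using h2
    have h0 : (r - s * γ) * γ = 0 := by linear_combination -hs
    exact hγ1 (((hunit _ hrs).mul_right_eq_zero).1 h0)
  -- key coefficient lemma
  have key : ∀ p : R[X], p ∈ J →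
      p.coeff 0 ∈ Ideal.span {γ^2} ∧ p.coeff 1 ∈ Ideal.span {γ^2} := by
    intro p hp
    rw [hJ] at hp
    obtain ⟨q, hq⟩ := Ideal.mem_span_singleton'.1 hp
    have c0 : (X ^ n - C lam : R[X]).coeff 0 = -lam := by
      simp [coeff_X_pow]; omega
    have c1 : (X ^ n - C lam : R[X]).coeff 1 = 0 := by
      simp [coeff_X_pow]; omega
    constructor
    · rw [← hq, mul_coeff_zero, c0]
      exact Ideal.mul_mem_left _ _ (neg_mem hlam)
    · rw [← hq, coeff_one_mul'', c0, c1, mul_zero, zero_add]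
      exact Ideal.mul_mem_left _ _ (neg_mem hlam)
  have keyQ : ∀ A B : R[X], Ideal.Quotient.mk J A = Ideal.Quotient.mk J B →
      (A - B).coeff 0 ∈ Ideal.span {γ^2} ∧ (A - B).coeff 1 ∈ Ideal.span {γ^2} :=
    fun A B h => key _ (Ideal.Quotient.eq.1 h)
  -- 1 ∉ I
  have honeI : (1 : R[X] ⧸ J) ∉ I := by
    rw [hI]
    intro h
    obtain ⟨a, b, hab⟩ := Ideal.mem_span_pair.1 h
    obtain ⟨A, rfl⟩ := Ideal.Quotient.mk_surjective a
    obtain ⟨B, rfl⟩ := Ideal.Quotient.mk_surjective b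
    have h2 : Ideal.Quotient.mk J (A * C γ + B * X) = Ideal.Quotient.mk J 1 := by
      rw [map_one, ← hab]; push_cast [map_add, map_mul]; ring
    have h3 := (keyQ _ _ h2).1
    simp [mul_coeff_zero] at h3
    apply hone
    have h4 := Ideal.sub_mem _
      (Ideal.mul_mem_left _ (A.coeff 0) (Ideal.mem_span_singleton_self γ)) (hle h3)
    simpa using h4
  -- primality of span {γ}
  have hprime : (Ideal.span {γ}).IsPrime := by
    rw [← hmax]; exact (IsLocalRing.maximalIdeal.isMaximal R).isPrime
  -- nilpotency facts
  have hlamnil : lam ^ e = 0 := by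
    obtain ⟨t, ht⟩ := Ideal.mem_span_singleton'.1 hlam
    rw [← ht, mul_pow, ← pow_mul]
    have h2e : γ ^ (2 * e) = 0 := by
      have : γ ^ (2 * e) = γ ^ e * γ ^ e := by ring
      rw [this, hγe, mul_zero]
    rw [h2e, mul_zero]
  have hXnil : IsNilpotent (Ideal.Quotient.mk J X) := by
    refine ⟨n * e, ?_⟩
    have h1 : (Ideal.Quotient.mk J X) ^ n = Ideal.Quotient.mk J (C lam) := by
      rw [← map_pow, Ideal.Quotient.eq, hJ]
      exact Ideal.mem_span_singleton_self _
    rw [pow_mul, h1, ← map_pow, ← C_pow, hlamnil, map_zero, map_zero]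
  -- not in I implies unit
  have claim : ∀ s : R[X] ⧸ J, s ∉ I → IsUnit s := by
    intro s hs
    obtain ⟨F, rfl⟩ := Ideal.Quotient.mk_surjective s
    by_cases h0 : F.coeff 0 ∈ Ideal.span {γ}
    · exfalso
      apply hs
      obtain ⟨t, ht⟩ := Ideal.mem_span_singleton'.1 h0
      rw [hI]
      refine Ideal.mem_span_pair.2
        ⟨Ideal.Quotient.mk J (C t), Ideal.Quotient.mk J F.divX, ?_⟩
      have h6 : (Ideal.Quotient.mk J) (C t * C γ + F.divX * X) = Ideal.Quotient.mk J F := by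
        congr 1
        rw [← C_mul, ht]
        linear_combination X_mul_divX_add F
      rw [map_add, map_mul, map_mul] at h6
      exact h6
    · have hu : IsUnit (Ideal.Quotient.mk J (C (F.coeff 0))) := (hunit _ h0).map ((Ideal.Quotient.mk J).comp (Polynomial.C : R →+* R[X]))
      have hrw : Ideal.Quotient.mk J F
          = Ideal.Quotient.mk J (C (F.coeff 0))
            + Ideal.Quotient.mk J X * Ideal.Quotient.mk J F.divX := by
        rw [← map_mul, ← map_add]
        congr 1
        linear_combination (X_mul_divX_add F).symm
      have hnil : IsNilpotent (Ideal.Quotient.mk J X * Ideal.Quotient.mk J F.divX) := by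
        obtain ⟨m, hm⟩ := hXnil
        exact ⟨m, by rw [mul_pow, hm, zero_mul]⟩
      rw [hrw]
      exact IsNilpotent.isUnit_add_left_of_commute hnil hu (Commute.all _ _)
  have hnt : Nontrivial (R[X] ⧸ J) :=
    ⟨⟨0, 1, fun h => honeI (h ▸ I.zero_mem)⟩⟩
  refine ⟨?_, ?_, ?_, ?_⟩
  · -- IsLocalRing
    refine IsLocalRing.of_nonunits_add ?_
    intro a b ha hb
    have haI : a ∈ I := by by_contra h; exact ha (claim a h)
    have hbI : b ∈ I := by by_contra h; exact hb (claim b h)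
    rw [mem_nonunits_iff]
    intro hu
    have htop := Ideal.eq_top_of_isUnit_mem _ (I.add_mem haI hbI) hu
    exact honeI (htop ▸ Submodule.mem_top)
  · -- IsMaximal
    refine Ideal.isMaximal_def.2 ⟨?_, ?_⟩
    · intro h; exact honeI (h ▸ Submodule.mem_top)
    · intro J' hJ'
      obtain ⟨x, hxJ', hxI⟩ := SetLike.exists_of_lt hJ'
      exact Ideal.eq_top_of_isUnit_mem _ hxJ' (claim x hxI)
  · -- not principal
    rintro ⟨g, hg⟩
    have hgI : g ∈ I := by rw [hg]; exact Submodule.mem_span_singleton_self g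
    rw [hI] at hgI
    obtain ⟨c, d, hcd⟩ := Ideal.mem_span_pair.1 hgI
    obtain ⟨P, rfl⟩ := Ideal.Quotient.mk_surjective c
    obtain ⟨Q, rfl⟩ := Ideal.Quotient.mk_surjective d
    have hgeq : g = Ideal.Quotient.mk J (P * C γ + Q * X) := by
      rw [← hcd, map_add, map_mul, map_mul]
    have hX : Ideal.Quotient.mk J X ∈ I := by
      rw [hI]; exact Ideal.subset_span (by simp)
    have hγI : Ideal.Quotient.mk J (C γ) ∈ I := by
      rw [hI]; exact Ideal.subset_span (by simp)
    rw [hg] at hX hγI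
    obtain ⟨a, ha⟩ := Ideal.mem_span_singleton'.1 hX
    obtain ⟨b, hb⟩ := Ideal.mem_span_singleton'.1 hγI
    obtain ⟨A, rfl⟩ := Ideal.Quotient.mk_surjective a
    obtain ⟨B, rfl⟩ := Ideal.Quotient.mk_surjective b
    rw [hgeq, ← map_mul] at ha hb
    have e1 := (keyQ _ _ ha).2
    have e2 := (keyQ _ _ hb).1
    have e3 := (keyQ _ _ hb).2
    simp [coeff_one_mul'', mul_coeff_zero] at e1 e2 e3
    have f1 : (1 : R) - A.coeff 0 * Q.coeff 0 ∈ Ideal.span {γ} := by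
      have hγm : (A.coeff 0 * P.coeff 1 + A.coeff 1 * P.coeff 0) * γ ∈ Ideal.span {γ} :=
        Ideal.mul_mem_left _ _ (Ideal.mem_span_singleton_self γ)
      have h := Ideal.sub_mem _ hγm (hle e1)
      rwa [show (A.coeff 0 * P.coeff 1 + A.coeff 1 * P.coeff 0) * γ -
          (A.coeff 0 * (P.coeff 1 * γ + Q.coeff 0) + A.coeff 1 * (P.coeff 0 * γ) - 1)
          = 1 - A.coeff 0 * Q.coeff 0 from by ring] at h
    have f2 : B.coeff 0 * P.coeff 0 - 1 ∈ Ideal.span {γ} := by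
      refine L1 _ ?_
      rw [show (B.coeff 0 * P.coeff 0 - 1) * γ = B.coeff 0 * (P.coeff 0 * γ) - γ from by ring]
      exact e2
    have f3 : B.coeff 0 * Q.coeff 0 ∈ Ideal.span {γ} := by
      have hγm : (B.coeff 0 * P.coeff 1 + B.coeff 1 * P.coeff 0) * γ ∈ Ideal.span {γ} :=
        Ideal.mul_mem_left _ _ (Ideal.mem_span_singleton_self γ)
      have h := Ideal.sub_mem _ (hle e3) hγm
      rwa [show B.coeff 0 * (P.coeff 1 * γ + Q.coeff 0) + B.coeff 1 * (P.coeff 0 * γ) -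
          (B.coeff 0 * P.coeff 1 + B.coeff 1 * P.coeff 0) * γ
          = B.coeff 0 * Q.coeff 0 from by ring] at h
    have hAQn : A.coeff 0 * Q.coeff 0 ∉ Ideal.span {γ} := fun h =>
      hone (by simpa using Ideal.add_mem _ f1 h)
    have hBPn : B.coeff 0 * P.coeff 0 ∉ Ideal.span {γ} := fun h =>
      hone (by simpa using Ideal.sub_mem _ h f2)
    rcases hprime.mem_or_mem f3 with h | h
    · exact hBPn (Ideal.mul_mem_right _ _ h)
    · exact hAQn (Ideal.mul_mem_left _ _ h)
  · -- not a chain ring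
    intro hch
    rcases hch (Ideal.span {Ideal.Quotient.mk J (C γ)})
        (Ideal.span {Ideal.Quotient.mk J X}) with h | h
    · obtain ⟨a, ha⟩ := Ideal.mem_span_singleton'.1
        (h (Ideal.mem_span_singleton_self _))
      obtain ⟨A, rfl⟩ := Ideal.Quotient.mk_surjective a
      rw [← map_mul] at ha
      have e1 := (keyQ _ _ ha).1
      simp [mul_coeff_zero] at e1
      exact hone (L1 1 (by simpa using e1))
    · obtain ⟨a, ha⟩ := Ideal.mem_span_singleton'.1
        (h (Ideal.mem_span_singleton_self _))
      obtain ⟨A, rfl⟩ := Ideal.Quotient.mk_surjective a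
      rw [← map_mul] at ha
      have e1 := (keyQ _ _ ha).2
      simp [coeff_one_mul'', mul_coeff_zero] at e1
      have h5 := Ideal.sub_mem _
        (Ideal.mul_mem_left _ (A.coeff 1) (Ideal.mem_span_singleton_self γ)) (hle e1)
      exact hone (by simpa using h5)
end

section
/- Let R be a finite commutative chain ring with maximal ideal γR of nilpotency index e, C a linear code over R, and for 1 ≤ j ≤ e let μ_j : R^n → (R/γ^j R)^n be coordinatewise reduction. For all 0 ≤ i < j ≤ e, Tor_i(C) equals the image under the canonical isomorphism Φ_j (between the residue field of R/γ^j R and the residue field of R, extended coordinatewise) of Tor_i(μ_j(C)). -/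
/-- The `i`-th torsion code of a code `C ⊆ A^n`:
`Tor_i(C) = { v̄ : g^i v ∈ C }`, a set of vectors over the residue ring `A ⧸ ⟨g⟩`. -/
def torCode {A : Type} [CommRing A] (g : A) (i n : ℕ) (C : Set (Fin n → A)) :
    Set (Fin n → A ⧸ Ideal.span {g}) :=
  { w | ∃ v : Fin n → A, g ^ i • v ∈ C ∧
      (fun t => Ideal.Quotient.mk (Ideal.span {g}) (v t)) = w }

/-- For `0 ≤ i < j ≤ e`, `Tor_i(C)` equals the image, under the
canonical isomorphism `Φ_j` between the residue field of `R ⧸ γ^j R` and that of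
`R` (applied coordinatewise), of `Tor_i(μ_j(C))`. -/
theorem stmt_11 {R : Type} [CommRing R] [Fintype R] [IsLocalRing R]
    (γ : R) (e : ℕ)
    (hchain : ∀ I J : Ideal R, I ≤ J ∨ J ≤ I)
    (hmax : IsLocalRing.maximalIdeal R = Ideal.span {γ})
    (he : 0 < e) (hγe : γ ^ e = 0)
    (hγlt : ∀ k, 0 < k → k < e → γ ^ k ≠ 0)
    (n : ℕ) (C : Submodule R (Fin n → R))
    (i j : ℕ) (hij : i < j) (hje : j ≤ e)
    (Φ : ((R ⧸ Ideal.span {γ ^ j}) ⧸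
        Ideal.span {Ideal.Quotient.mk (Ideal.span {γ ^ j}) γ}) →+*
        (R ⧸ Ideal.span {γ}))
    (hΦ : ∀ a : R,
      Φ (Ideal.Quotient.mk (Ideal.span {Ideal.Quotient.mk (Ideal.span {γ ^ j}) γ})
          (Ideal.Quotient.mk (Ideal.span {γ ^ j}) a)) =
        Ideal.Quotient.mk (Ideal.span {γ}) a) :
    torCode γ i n (C : Set (Fin n → R)) =
      (fun w (t : Fin n) => Φ (w t)) ''
        torCode (Ideal.Quotient.mk (Ideal.span {γ ^ j}) γ) i n
          ((fun (v : Fin n → R) (t : Fin n) =>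
              Ideal.Quotient.mk (Ideal.span {γ ^ j}) (v t)) ''
            (C : Set (Fin n → R))) := by
  ext w
  constructor
  · rintro ⟨v, hv, rfl⟩
    refine ⟨fun t => Ideal.Quotient.mk _ (Ideal.Quotient.mk (Ideal.span {γ ^ j}) (v t)),
      ⟨fun t => Ideal.Quotient.mk (Ideal.span {γ ^ j}) (v t), ⟨γ ^ i • v, hv, ?_⟩, rfl⟩, ?_⟩
    · funext t
      simp [Pi.smul_apply, smul_eq_mul, map_mul, map_pow]
    · funext t
      exact hΦ (v t)
  · rintro ⟨u, ⟨v', hv', rfl⟩, rfl⟩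
    obtain ⟨c, hc, hqc⟩ := hv'
    choose v hv using fun t => Ideal.Quotient.mk_surjective (v' t)
    have hdiff : ∀ t, ∃ r : R, γ ^ i * v t - c t = γ ^ j * r := by
      intro t
      have h1 : Ideal.Quotient.mk (Ideal.span {γ ^ j}) (γ ^ i * v t)
          = Ideal.Quotient.mk (Ideal.span {γ ^ j}) (c t) := by
        have := congrFun hqc t
        simp only [Pi.smul_apply, smul_eq_mul] at this
        rw [map_mul, map_pow, hv t, ← this]
      have h2 : γ ^ i * v t - c t ∈ Ideal.span {γ ^ j} := Ideal.Quotient.eq.mp h1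
      rw [Ideal.mem_span_singleton'] at h2
      obtain ⟨r, hr⟩ := h2
      exact ⟨r, by rw [← hr, mul_comm]⟩
    choose r hr using hdiff
    refine ⟨fun t => v t - γ ^ (j - i) * r t, ?_, ?_⟩
    · have heq : (γ ^ i • fun t => v t - γ ^ (j - i) * r t) = c := by
        funext t
        simp only [Pi.smul_apply, smul_eq_mul]
        have hji : γ ^ i * γ ^ (j - i) = γ ^ j := by
          rw [← pow_add, Nat.add_sub_cancel' hij.le]
        have h3 : γ ^ i * (v t - γ ^ (j - i) * r t)
            = γ ^ i * v t - γ ^ j * r t := by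
          rw [← hji]; ring
        rw [h3]
        linear_combination hr t
      rw [heq]; exact hc
    · funext t
      show Ideal.Quotient.mk (Ideal.span {γ}) (v t - γ ^ (j - i) * r t)
          = Φ (Ideal.Quotient.mk _ (v' t))
      have h1 : γ ^ (j - i) * r t ∈ Ideal.span {γ} := by
        rw [Ideal.mem_span_singleton]
        exact dvd_mul_of_dvd_left (dvd_pow_self γ (by omega)) _
      rw [map_sub, Ideal.Quotient.eq_zero_iff_mem.mpr h1, sub_zero, ← hv t, hΦ (v t)]
end

section
/- Let R be a finite commutative chain ring with maximal ideal γR of nilpotency index e, λ a non-invertible element of R, and C a nonzero λ-constacyclic code of length n over R (a linear code closed under the map τ_λ(x₀,…,x_{n−1}) = (λx_{n−1}, x₀,…,x_{n−2})). Then the minimum Hamming distance of C is 1, i.e., C contains a codeword of Hamming weight 1. -/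
/-- The `μ`-constacyclic shift `τ_μ (x₀, …, x_{n−1}) = (μ x_{n−1}, x₀, …, x_{n−2})`. -/
def tauShift {A : Type} [Mul A] (μ : A) {n : ℕ} (v : Fin n → A) : Fin n → A :=
  fun i =>
    if (i : ℕ) = 0 then μ * v ⟨n - 1, Nat.sub_lt (Fin.pos i) Nat.one_pos⟩
    else v ⟨(i : ℕ) - 1, Nat.lt_of_le_of_lt (Nat.sub_le _ 1) i.isLt⟩

lemma tauShift_dvd {R : Type} [CommRing R] (lam : R) {n : ℕ} (hn : 0 < n) (v : Fin n → R) :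
    ∀ k (i : Fin n), lam ^ ((k + (n - 1) - (i : ℕ)) / n) ∣ (tauShift lam)^[k] v i := by
  intro k
  induction k with
  | zero =>
    intro i
    have hle : (0 + (n - 1) - (i : ℕ)) < n := by
      have := i.isLt; omega
    rw [Nat.div_eq_of_lt hle]
    simpa using dvd_refl (1 : R) |>.trans (one_dvd _)
  | succ k ih =>
    intro i
    rw [Function.iterate_succ_apply']
    set w := (tauShift lam)^[k] v with hw
    unfold tauShift
    by_cases h0 : (i : ℕ) = 0
    · simp only [h0, if_true]
      have hnum : (k + 1 + (n - 1) - 0) = k + n := by omega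
      rw [h0] at *
      have hexp : (k + 1 + (n - 1) - 0) / n = k / n + 1 := by
        rw [hnum]; exact Nat.add_div_right k hn
      rw [hexp]
      have hIH := ih ⟨n - 1, Nat.sub_lt hn Nat.one_pos⟩
      have heq : (k + (n - 1) - (n - 1)) / n = k / n := by
        congr 1; omega
      rw [heq] at hIH
      rcases hIH with ⟨c, hc⟩
      exact ⟨c, by rw [pow_succ, hc]; ring⟩
    · simp only [h0, if_false]
      have hIH := ih ⟨(i : ℕ) - 1, Nat.lt_of_le_of_lt (Nat.sub_le _ 1) i.isLt⟩
      have : (k + (n - 1) - ((i : ℕ) - 1)) / n = (k + 1 + (n - 1) - (i : ℕ)) / n := by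
        congr 1; have := i.isLt; omega
      rw [this] at hIH
      exact hIH

/-- A nonzero NIE-constacyclic code `C` (λ non-invertible) over a
finite chain ring has minimum Hamming distance 1: it contains a codeword of
Hamming weight exactly 1. -/
theorem stmt_13 {R : Type} [CommRing R] [Fintype R] [DecidableEq R] [IsLocalRing R]
    (γ : R) (e : ℕ)
    (hchain : ∀ I J : Ideal R, I ≤ J ∨ J ≤ I)
    (hmax : IsLocalRing.maximalIdeal R = Ideal.span {γ})
    (he : 0 < e) (hγe : γ ^ e = 0)
    (hγlt : ∀ k, 0 < k → k < e → γ ^ k ≠ 0)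
    (lam : R) (hlam : ¬ IsUnit lam)
    (n : ℕ) (hn : 0 < n)
    (C : Submodule R (Fin n → R))
    (hCτ : ∀ v ∈ C, tauShift lam v ∈ C)
    (hC0 : C ≠ ⊥) :
    ∃ c ∈ C, (Finset.univ.filter fun i => c i ≠ 0).card = 1 := by
  -- λ is nilpotent: λ ∈ γR and γ^e = 0
  have hmem : lam ∈ IsLocalRing.maximalIdeal R := hlam
  rw [hmax, Ideal.mem_span_singleton] at hmem
  obtain ⟨a, ha⟩ := hmem
  have hlame : lam ^ e = 0 := by
    rw [ha, mul_pow, hγe, zero_mul]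
  -- get a nonzero codeword
  obtain ⟨c, hcC, hc0⟩ := Submodule.exists_mem_ne_zero_of_ne_bot hC0
  -- iterates of τ stay in C
  have hiter : ∀ k, (tauShift lam)^[k] c ∈ C := by
    intro k
    induction k with
    | zero => exact hcC
    | succ k ih => rw [Function.iterate_succ_apply']; exact hCτ _ ih
  -- τ^(n*e) c = 0
  have hzero : (tauShift lam)^[n * e] c = 0 := by
    funext i
    have hdvd := tauShift_dvd lam hn c (n * e) i
    have hle : e ≤ (n * e + (n - 1) - (i : ℕ)) / n := by
      rw [Nat.le_div_iff_mul_le hn]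
      have hi2 : (i : ℕ) ≤ n - 1 := by have := i.isLt; omega
      rw [Nat.add_sub_assoc hi2, mul_comm]
      exact Nat.le_add_right _ _
    have : lam ^ ((n * e + (n - 1) - (i : ℕ)) / n) = 0 := by
      calc lam ^ ((n * e + (n - 1) - (i : ℕ)) / n)
          = lam ^ e * lam ^ ((n * e + (n - 1) - (i : ℕ)) / n - e) := by
            rw [← pow_add]; congr 1; omega
        _ = 0 := by rw [hlame, zero_mul]
    rw [this] at hdvd
    exact (zero_dvd_iff.mp hdvd)
  -- minimal k such that τ^k c = 0
  have hex : ∃ k, (tauShift lam)^[k] c = 0 := ⟨n * e, hzero⟩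
  classical
  set K := Nat.find hex with hK
  have hKspec : (tauShift lam)^[K] c = 0 := Nat.find_spec hex
  have hKpos : 0 < K := by
    rcases Nat.eq_zero_or_pos K with h | h
    · exfalso; apply hc0; have := hKspec; rw [h] at this; simpa using this
    · exact h
  set v := (tauShift lam)^[K - 1] c with hv
  have hvC : v ∈ C := hiter _
  have hvne : v ≠ 0 := Nat.find_min hex (by omega)
  have hτv : tauShift lam v = 0 := by
    have : (tauShift lam)^[K - 1 + 1] c = 0 := by
      rw [show K - 1 + 1 = K by omega]; exact hKspec
    rw [Function.iterate_succ_apply'] at this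
    exact this
  -- coordinates of v below n-1 are zero
  have hcoord : ∀ j : Fin n, (j : ℕ) < n - 1 → v j = 0 := by
    intro j hj
    have hi : ((j : ℕ) + 1) < n := by omega
    have := congrFun hτv ⟨(j : ℕ) + 1, hi⟩
    unfold tauShift at this
    simp only [Nat.add_sub_cancel] at this
    rw [if_neg (by simp)] at this
    simpa using this
  have hlast : v ⟨n - 1, Nat.sub_lt hn Nat.one_pos⟩ ≠ 0 := by
    intro h
    apply hvne
    funext j
    by_cases hj : (j : ℕ) = n - 1
    · have : j = ⟨n - 1, Nat.sub_lt hn Nat.one_pos⟩ := Fin.ext hj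
      rw [this, h]; rfl
    · have : (j : ℕ) < n - 1 := by have := j.isLt; omega
      exact hcoord j this
  refine ⟨v, hvC, ?_⟩
  have : (Finset.univ.filter fun i => v i ≠ 0) = {⟨n - 1, Nat.sub_lt hn Nat.one_pos⟩} := by
    ext i
    simp only [Finset.mem_filter, Finset.mem_univ, true_and, Finset.mem_singleton]
    constructor
    · intro hi
      by_contra hne
      have : (i : ℕ) < n - 1 := by
        have := i.isLt
        have : (i : ℕ) ≠ n - 1 := fun h => hne (Fin.ext h)
        omega
      exact hi (hcoord i this)
    · intro h; rw [h]; exact hlast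
  rw [this, Finset.card_singleton]
end

section
/- Let R be a finite commutative chain ring with maximal ideal γR of nilpotency index e, λ a non-invertible element of R, and C a λ-constacyclic code of length n over R with C ≠ R^n. Then the minimum Hamming distance of the dual code C^⊥ equals 1. -/
/-- The Euclidean dual of a code, as a set. -/
def dualSet {A : Type} [CommRing A] {n : ℕ} (C : Set (Fin n → A)) :
    Set (Fin n → A) :=
  { v | ∀ c ∈ C, ∑ i, c i * v i = 0 }

/-- Row `k` of the matrix of shifted codewords. -/
def rowMat {R : Type} [CommRing R] (lam : R) {n : ℕ} (c : Fin n → R) (k i : Fin n) : R :=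
  if h : (k : ℕ) ≤ (i : ℕ) then c ⟨(i : ℕ) - k, Nat.lt_of_le_of_lt (Nat.sub_le _ _) i.isLt⟩
  else lam * c ⟨n + (i : ℕ) - k, by have := k.isLt; omega⟩

lemma fin_app_congr {R : Type} {n : ℕ} (c : Fin n → R) {a b : ℕ} (ha : a < n) (hb : b < n)
    (h : a = b) : c ⟨a, ha⟩ = c ⟨b, hb⟩ := by subst h; rfl

lemma rowMat_zero {R : Type} [CommRing R] (lam : R) {n : ℕ} (hn : 0 < n) (c : Fin n → R) :
    rowMat lam c ⟨0, hn⟩ = c := by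
  funext i
  simp only [rowMat, Nat.zero_le, dif_pos]
  exact congrArg c (Fin.ext (by simp))

lemma rowMat_succ {R : Type} [CommRing R] (lam : R) {n : ℕ} (c : Fin n → R)
    (k : ℕ) (hk : k + 1 < n) :
    rowMat lam c ⟨k + 1, hk⟩ = tauShift lam (rowMat lam c ⟨k, by omega⟩) := by
  funext i
  simp only [tauShift, rowMat]
  split_ifs
  all_goals first
    | (exfalso; omega)
    | (exact fin_app_congr c _ _ (by omega))
    | (exact congrArg (fun x => lam * x) (fin_app_congr c _ _ (by omega)))

/-- If `C ≠ R^n` is an NIE-constacyclic code over a finite chain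
ring, then its dual has minimum Hamming distance 1. -/
theorem stmt_16 {R : Type} [CommRing R] [Fintype R] [DecidableEq R] [IsLocalRing R]
    (γ : R) (e : ℕ)
    (hchain : ∀ I J : Ideal R, I ≤ J ∨ J ≤ I)
    (hmax : IsLocalRing.maximalIdeal R = Ideal.span {γ})
    (he : 0 < e) (hγe : γ ^ e = 0)
    (hγlt : ∀ k, 0 < k → k < e → γ ^ k ≠ 0)
    (lam : R) (hlam : ¬ IsUnit lam)
    (n : ℕ) (hn : 0 < n)
    (C : Submodule R (Fin n → R))
    (hCτ : ∀ v ∈ C, tauShift lam v ∈ C)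
    (hCne : C ≠ ⊤) :
    ∃ v ∈ dualSet (C : Set (Fin n → R)),
      (Finset.univ.filter fun i => v i ≠ 0).card = 1 := by
  by_cases hunit : ∃ c ∈ C, IsUnit (c ⟨0, hn⟩)
  · exfalso
    obtain ⟨c, hcC, hc0⟩ := hunit
    -- all rows are in C
    have hrow : ∀ k : ℕ, ∀ hk : k < n, rowMat lam c ⟨k, hk⟩ ∈ C := by
      intro k
      induction k with
      | zero => intro hk; rw [rowMat_zero lam hk c]; exact hcC
      | succ k ih =>
        intro hk
        rw [rowMat_succ lam c k hk]
        exact hCτ _ (ih (by omega))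
    set M : Matrix (Fin n) (Fin n) R := Matrix.of (fun k i => rowMat lam c k i) with hM
    -- determinant is a unit
    have hdiag : ∀ k : Fin n, M k k = c ⟨0, hn⟩ := by
      intro k
      show rowMat lam c k k = _
      rw [rowMat, dif_pos le_rfl]
      congr 1
      exact Fin.ext (by simp)
    have hdet : IsUnit M.det := by
      by_contra hdet
      set I := Ideal.span ({lam} : Set R)
      have hIle : I ≤ IsLocalRing.maximalIdeal R := by
        rw [Ideal.span_le, Set.singleton_subset_iff]
        exact hlam
      set q := Ideal.Quotient.mk I
      have htri : (M.map q).BlockTriangular id := by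
        intro k i hik
        simp only [Matrix.map_apply]
        show q (rowMat lam c k i) = 0
        rw [rowMat, dif_neg (by exact Nat.not_le.mpr hik)]
        rw [map_mul, Ideal.Quotient.eq_zero_iff_mem.mpr (Ideal.mem_span_singleton_self lam), zero_mul]
      have hdq : q M.det = q ((c ⟨0, hn⟩) ^ n) := by
        rw [RingHom.map_det q M, RingHom.mapMatrix_apply, Matrix.det_of_upperTriangular htri]
        simp only [Matrix.map_apply]
        rw [Finset.prod_congr rfl (fun k _ => by rw [hdiag k])]
        simp [map_pow]
      have hsub : M.det - (c ⟨0, hn⟩) ^ n ∈ I := Ideal.Quotient.eq.mp hdq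
      have h1 : M.det ∈ IsLocalRing.maximalIdeal R :=
        (IsLocalRing.mem_maximalIdeal _).mpr hdet
      have h2 : (c ⟨0, hn⟩) ^ n ∈ IsLocalRing.maximalIdeal R := by
        have := (IsLocalRing.maximalIdeal R).sub_mem h1 (hIle hsub)
        simpa using this -- keep
      exact (IsLocalRing.mem_maximalIdeal _).mp h2 (hc0.pow n)
    -- C = ⊤
    apply hCne
    rw [eq_top_iff]
    intro v _
    have hv : v = Matrix.vecMul (Matrix.vecMul v M⁻¹) M := by
      rw [Matrix.vecMul_vecMul, Matrix.nonsing_inv_mul M hdet, Matrix.vecMul_one]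
    have hsum : Matrix.vecMul (Matrix.vecMul v M⁻¹) M
        = ∑ k : Fin n, (Matrix.vecMul v M⁻¹) k • (fun i => M k i) := by
      funext i
      simp [Matrix.vecMul, dotProduct, Finset.sum_apply]
    rw [hv, hsum]
    exact Submodule.sum_mem C fun k _ =>
      Submodule.smul_mem C _ (hrow k k.isLt)
  · -- weight-one dual vector γ^(e-1) • e₀
    push_neg at hunit
    refine ⟨fun i => if i = ⟨0, hn⟩ then γ ^ (e - 1) else 0, ?_, ?_⟩
    · intro c hc
      rw [Finset.sum_eq_single ⟨0, hn⟩]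
      · show c ⟨0, hn⟩ * (if (⟨0, hn⟩ : Fin n) = ⟨0, hn⟩ then γ ^ (e - 1) else 0) = 0
        rw [if_pos rfl]
        have : c ⟨0, hn⟩ ∈ Ideal.span ({γ} : Set R) := by
          rw [← hmax]
          exact (IsLocalRing.mem_maximalIdeal _).mpr (hunit c hc)
        obtain ⟨a, ha⟩ := Ideal.mem_span_singleton'.mp this
        have hpow : γ * γ ^ (e - 1) = γ ^ e := by
          rw [← pow_succ']; congr 1; omega
        rw [← ha, mul_assoc, hpow, hγe, mul_zero]
      · intro b _ hb; simp [if_neg hb]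
      · intro h; exact absurd (Finset.mem_univ _) h
    · have hne : γ ^ (e - 1) ≠ 0 := by
        rcases Nat.eq_or_lt_of_le he with h1 | h1
        · rw [← h1]; simpa using one_ne_zero
        · exact hγlt (e - 1) (by omega) (by omega)
      rw [Finset.card_eq_one]
      refine ⟨⟨0, hn⟩, ?_⟩
      ext i
      simp only [Finset.mem_filter, Finset.mem_univ, true_and, Finset.mem_singleton]
      constructor
      · intro h; by_contra hne2; exact h (by simp [if_neg hne2])
      · intro h; subst h; simp [hne]
end

section
/- Let R be a finite commutative chain ring with maximal ideal γR of nilpotency index e, λ a non-invertible element of R, and C a λ-constacyclic code of length n over R. Then the dual C^⊥ is a λ̂-constacyclic code for some λ̂ ∈ R if and only if C = γ^i R^n for some 0 ≤ i ≤ e. Moreover, if C = γ^i R^n then C^⊥ = γ^{e−i} R^n, and both C and C^⊥ are λ̂-constacyclic for every λ̂ ∈ R. -/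
section ChainRing

variable {R : Type} [CommRing R] [IsLocalRing R]

/-- Every nonzero element of the chain ring is a unit times a power of γ. -/
lemma cr_elem_struct (γ : R) (e : ℕ)
    (hmax : IsLocalRing.maximalIdeal R = Ideal.span {γ}) (hγe : γ ^ e = 0)
    (x : R) (hx : x ≠ 0) : ∃ u k, IsUnit u ∧ k < e ∧ x = u * γ ^ k := by
  have hex : ∃ m, x ∉ Ideal.span {γ ^ m} := by
    refine ⟨e, ?_⟩
    rw [hγe]
    simpa [Ideal.span_singleton_eq_bot.mpr rfl] using hx
  classical
  let m := Nat.find hex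
  have hm : x ∉ Ideal.span {γ ^ m} := Nat.find_spec hex
  have hm1 : 1 ≤ m := by
    rcases Nat.eq_zero_or_pos m with h0 | h1
    · exfalso; apply hm; rw [h0]; simp [Ideal.span_singleton_one]
    · exact h1
  have hk1 : x ∈ Ideal.span {γ ^ (m - 1)} := by
    by_contra h
    exact absurd (Nat.find_min' hex h) (by omega)
  obtain ⟨c, hc⟩ := Ideal.mem_span_singleton'.1 hk1
  have hcu : IsUnit c := by
    by_contra hcu
    have hcmem : c ∈ Ideal.span {γ} := by
      rw [← hmax]; exact hcu
    obtain ⟨d, hd⟩ := Ideal.mem_span_singleton'.1 hcmem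
    apply hm
    have : x = d * γ ^ (m - 1 + 1) := by
      rw [← hc, ← hd]; ring
    rw [show m = m - 1 + 1 by omega]
    exact Ideal.mem_span_singleton'.2 ⟨d, this.symm⟩
  have hklt : m - 1 < e := by
    by_contra h
    push_neg at h
    apply hx
    have : γ ^ (m - 1) = 0 := by
      have : γ ^ (m - 1) = γ ^ e * γ ^ (m - 1 - e) := by
        rw [← pow_add]; congr 1; omega
      rw [this, hγe, zero_mul]
    rw [← hc, this, mul_zero]
  exact ⟨c, m - 1, hcu, hklt, hc.symm⟩

/-- Annihilator of γ^k is (γ^(e-k)). -/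
lemma cr_ann (γ : R) (e : ℕ)
    (hmax : IsLocalRing.maximalIdeal R = Ideal.span {γ}) (hγe : γ ^ e = 0)
    (hγlt : ∀ k, 0 < k → k < e → γ ^ k ≠ 0)
    (k : ℕ) (hk : k ≤ e) (x : R) :
    γ ^ k * x = 0 ↔ x ∈ Ideal.span {γ ^ (e - k)} := by
  constructor
  · intro h
    rcases eq_or_ne x 0 with rfl | hx
    · exact Submodule.zero_mem _
    obtain ⟨u, m, hu, hme, rfl⟩ := cr_elem_struct γ e hmax hγe x hx
    have h2 : u * γ ^ (k + m) = 0 := by rw [pow_add]; ring_nf; ring_nf at h; linear_combination h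
    have h3 : γ ^ (k + m) = 0 := (hu.mul_right_eq_zero).1 h2
    have hkm : e ≤ k + m := by
      by_contra hlt
      push_neg at hlt
      rcases Nat.eq_zero_or_pos (k + m) with h0 | hpos
      · rw [h0, pow_zero] at h3
        exact one_ne_zero h3
      · exact hγlt (k + m) hpos hlt h3
    refine Ideal.mem_span_singleton'.2 ⟨u * γ ^ (m - (e - k)), ?_⟩
    rw [mul_assoc, ← pow_add]
    congr 2
    omega
  · rintro h
    obtain ⟨a, rfl⟩ := Ideal.mem_span_singleton'.1 h
    rw [show γ ^ k * (a * γ ^ (e - k)) = a * (γ ^ (k + (e - k))) by rw [pow_add]; ring]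
    rw [show k + (e - k) = e by omega, hγe, mul_zero]

/-- Every ideal is (γ^k) for some k ≤ e. -/
lemma cr_ideal_class (γ : R) (e : ℕ)
    (hmax : IsLocalRing.maximalIdeal R = Ideal.span {γ}) (hγe : γ ^ e = 0)
    (I : Ideal R) : ∃ k ≤ e, I = Ideal.span {γ ^ k} := by
  classical
  have hexk : ∃ k, γ ^ k ∈ I := ⟨e, by rw [hγe]; exact I.zero_mem⟩
  let k := Nat.find hexk
  have hkI : γ ^ k ∈ I := Nat.find_spec hexk
  have hke : k ≤ e := Nat.find_min' hexk (by rw [hγe]; exact I.zero_mem)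
  refine ⟨k, hke, le_antisymm ?_ ?_⟩
  · intro y hy
    rcases eq_or_ne y 0 with rfl | hy0
    · exact Submodule.zero_mem _
    obtain ⟨u, m, hu, hme, rfl⟩ := cr_elem_struct γ e hmax hγe y hy0
    have hmm : γ ^ m ∈ I := by
      obtain ⟨w, rfl⟩ := hu
      have := I.mul_mem_left ((w⁻¹ : Rˣ) : R) hy
      simpa [mul_assoc] using this
    have hmk : k ≤ m := Nat.find_min' hexk hmm
    refine Ideal.mem_span_singleton'.2 ⟨u * γ ^ (m - k), ?_⟩
    rw [mul_assoc, ← pow_add]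
    congr 2
    omega
  · rw [Ideal.span_le, Set.singleton_subset_iff]
    exact hkI

end ChainRing






section ChainRing2
variable {R : Type} [CommRing R] [IsLocalRing R]

/-- Baer's criterion for R over itself. -/
lemma cr_baer (γ : R) (e : ℕ)
    (hmax : IsLocalRing.maximalIdeal R = Ideal.span {γ}) (hγe : γ ^ e = 0)
    (hγlt : ∀ k, 0 < k → k < e → γ ^ k ≠ 0) :
    Module.Baer R R := by
  intro I g
  obtain ⟨k, hke, rfl⟩ := cr_ideal_class γ e hmax hγe I
  have hmem : γ ^ k ∈ Ideal.span {γ ^ k} := Ideal.subset_span rfl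
  set y := g ⟨γ ^ k, hmem⟩ with hy
  have hann : γ ^ (e - k) * y = 0 := by
    have h1 : (γ ^ (e - k) • (⟨γ ^ k, hmem⟩ : Ideal.span {γ ^ k})) = 0 := by
      ext
      simp only [SetLike.val_smul, smul_eq_mul, ZeroMemClass.coe_zero]
      rw [← pow_add, show e - k + k = e by omega, hγe]
    calc γ ^ (e - k) * y = γ ^ (e - k) • y := rfl
      _ = g (γ ^ (e - k) • (⟨γ ^ k, hmem⟩ : Ideal.span {γ ^ k})) := (map_smul g _ _).symm
      _ = 0 := by rw [h1, map_zero]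
  have hy2 : y ∈ Ideal.span {γ ^ (e - (e - k))} :=
    (cr_ann γ e hmax hγe hγlt (e - k) (by omega) y).1 hann
  rw [show e - (e - k) = k by omega] at hy2
  obtain ⟨z, hz⟩ := Ideal.mem_span_singleton'.1 hy2
  refine ⟨LinearMap.toSpanSingleton R R z, ?_⟩
  intro x hx
  obtain ⟨c, hc⟩ := Ideal.mem_span_singleton'.1 hx
  have hxe : (⟨x, hx⟩ : Ideal.span {γ ^ k}) = c • ⟨γ ^ k, hmem⟩ := by
    ext; simp [← hc]
  rw [hxe, map_smul]
  simp only [LinearMap.toSpanSingleton_apply, smul_eq_mul, ← hy, ← hz, ← hc]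
  ring

/-- Separation lemma: if x ∉ M then some dual vector of M doesn't vanish on x. -/
lemma cr_separation (γ : R) (e : ℕ)
    (hmax : IsLocalRing.maximalIdeal R = Ideal.span {γ}) (he : 0 < e) (hγe : γ ^ e = 0)
    (hγlt : ∀ k, 0 < k → k < e → γ ^ k ≠ 0)
    {n : ℕ} (M : Submodule R (Fin n → R)) (x : Fin n → R) (hx : x ∉ M) :
    ∃ v : Fin n → R, (∀ m ∈ M, ∑ i, m i * v i = 0) ∧ ∑ i, x i * v i ≠ 0 := by
  classical
  have hexk : ∃ k, γ ^ k • x ∈ M := ⟨e, by rw [hγe, zero_smul]; exact M.zero_mem⟩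
  set k := Nat.find hexk with hkdef
  have hkmem : γ ^ k • x ∈ M := Nat.find_spec hexk
  have hke : k ≤ e := Nat.find_min' hexk (by rw [hγe, zero_smul]; exact M.zero_mem)
  have hkpos : 0 < k := by
    rcases Nat.eq_zero_or_pos k with h0 | h1
    · exfalso; apply hx; have := hkmem; rw [h0, pow_zero, one_smul] at this; exact this
    · exact h1
  have hγek : γ ^ (e - k) ≠ 0 := by
    rcases Nat.eq_zero_or_pos (e - k) with h0 | h1
    · rw [h0, pow_zero]; exact one_ne_zero
    · exact hγlt (e - k) h1 (by omega)
  set I : Ideal R := Ideal.span {γ ^ k} with hIdef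
  set Y := (Fin n → R) ⧸ M with hYdef
  set xb : Y := Submodule.Quotient.mk x with hxbdef
  set f0 : R →ₗ[R] Y := LinearMap.toSpanSingleton R Y xb with hf0def
  have hIker : (I : Submodule R R) ≤ LinearMap.ker f0 := by
    rw [hIdef, Ideal.span_le, Set.singleton_subset_iff]
    simp only [SetLike.mem_coe, LinearMap.mem_ker, LinearMap.toSpanSingleton_apply, hf0def]
    rw [hxbdef, ← Submodule.Quotient.mk_smul, Submodule.Quotient.mk_eq_zero]
    exact hkmem
  have hker2 : LinearMap.ker f0 ≤ (I : Submodule R R) := by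
    intro r hr
    rw [LinearMap.mem_ker] at hr
    have h5 : r • xb = 0 := by simpa [hf0def, LinearMap.toSpanSingleton_apply] using hr
    have hrx : r • x ∈ M := by
      rw [← Submodule.Quotient.mk_eq_zero, Submodule.Quotient.mk_smul]
      exact h5
    rcases eq_or_ne r 0 with rfl | hr0
    · exact Submodule.zero_mem _
    obtain ⟨u, m, hu, hme, rfl⟩ := cr_elem_struct γ e hmax hγe r hr0
    have hmx : γ ^ m • x ∈ M := by
      obtain ⟨w, rfl⟩ := hu
      have := M.smul_mem ((w⁻¹ : Rˣ) : R) hrx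
      rw [← mul_smul, ← mul_assoc] at this
      simpa using this
    have hmk : k ≤ m := Nat.find_min' hexk hmx
    exact Ideal.mem_span_singleton'.2 ⟨u * γ ^ (m - k),
      by rw [mul_assoc, ← pow_add, show m - k + k = m by omega]⟩
  set fbar : R ⧸ I →ₗ[R] Y := Submodule.liftQ I f0 hIker with hfbardef
  have hinj : Function.Injective fbar := by
    rw [← LinearMap.ker_eq_bot, hfbardef]
    exact Submodule.ker_liftQ_eq_bot I f0 hIker hker2
  have hg0 : (I : Submodule R R) ≤ LinearMap.ker (LinearMap.toSpanSingleton R R (γ ^ (e - k))) := by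
    rw [hIdef, Ideal.span_le, Set.singleton_subset_iff]
    simp only [SetLike.mem_coe, LinearMap.mem_ker, LinearMap.toSpanSingleton_apply, smul_eq_mul]
    rw [← pow_add, show k + (e - k) = e by omega, hγe]
  set g : R ⧸ I →ₗ[R] R := Submodule.liftQ I (LinearMap.toSpanSingleton R R (γ ^ (e - k))) hg0
    with hgdef
  have hinjR : Module.Injective R R := (cr_baer γ e hmax hγe hγlt).injective
  obtain ⟨h, hh⟩ := hinjR.out fbar hinj g
  set H : (Fin n → R) →ₗ[R] R := h.comp M.mkQ with hHdef
  refine ⟨fun i => H (fun j => if i = j then 1 else 0), ?_, ?_⟩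
  · intro m hm
    have h1 : H m = 0 := by
      simp only [hHdef, LinearMap.comp_apply]
      rw [show M.mkQ m = 0 by rwa [Submodule.mkQ_apply, Submodule.Quotient.mk_eq_zero], map_zero]
    have h6 := LinearMap.pi_apply_eq_sum_univ H m
    rw [h1] at h6
    simpa [smul_eq_mul] using h6.symm
  · have h2 : H x = γ ^ (e - k) := by
      have h3 : fbar (Submodule.Quotient.mk (1 : R)) = xb := by
        rw [hfbardef, Submodule.liftQ_apply, hf0def]
        simp [LinearMap.toSpanSingleton_apply]
      have h4 := hh (Submodule.Quotient.mk (1 : R))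
      rw [h3] at h4
      have h7 : H x = h xb := rfl
      rw [h7, h4, hgdef, Submodule.liftQ_apply]
      simp [LinearMap.toSpanSingleton_apply]
    have h6 := LinearMap.pi_apply_eq_sum_univ H x
    rw [h2] at h6
    intro hcon
    apply hγek
    rw [h6]
    simpa [smul_eq_mul] using hcon

end ChainRing2

/-- The backward shift `σ_μ (x₀,…,x_{n−1}) = (x₁, …, x_{n−1}, μ x₀)`. -/
def sigmaShift {A : Type} [Mul A] (μ : A) {n : ℕ} (v : Fin n → A) : Fin n → A :=
  fun i =>
    if h : (i : ℕ) + 1 < n then v ⟨(i : ℕ) + 1, h⟩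
    else μ * v ⟨0, i.pos⟩

lemma pairing {A : Type} [CommRing A] (μ : A) {n : ℕ} (c v : Fin n → A) :
    ∑ i, tauShift μ c i * v i = ∑ i, c i * sigmaShift μ v i := by
  cases n with
  | zero => simp
  | succ m =>
    rw [Fin.sum_univ_succ, Fin.sum_univ_castSucc]
    have h1 : tauShift μ c 0 * v 0 =
        c (Fin.last m) * sigmaShift μ v (Fin.last m) := by
      have ht : tauShift μ c 0 = μ * c (Fin.last m) := by
        simp only [tauShift, Fin.val_zero, if_pos rfl]
        congr 1
      have hs : sigmaShift μ v (Fin.last m) = μ * v 0 := by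
        simp only [sigmaShift, Fin.val_last]
        rw [dif_neg (by omega)]
        congr 1
      rw [ht, hs]
      ring
    have h2 : ∀ i : Fin m, tauShift μ c i.succ * v i.succ =
        c i.castSucc * sigmaShift μ v i.castSucc := by
      intro i
      have ht : tauShift μ c i.succ = c i.castSucc := by
        simp only [tauShift, Fin.val_succ]
        rw [if_neg (by omega)]
        exact congrArg c (Fin.ext (by simp))
      have hs : sigmaShift μ v i.castSucc = v i.succ := by
        simp only [sigmaShift, Fin.coe_castSucc]
        rw [dif_pos (by omega : (i : ℕ) + 1 < m + 1)]
        congr 1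
      rw [ht, hs]
    rw [h1, Finset.sum_congr rfl (fun i _ => h2 i)]
    exact add_comm _ _

/-- `dualSet` of a submodule, as a submodule. -/
def dualSubmodule {R : Type} [CommRing R] {n : ℕ} (C : Set (Fin n → R)) :
    Submodule R (Fin n → R) where
  carrier := dualSet C
  add_mem' := by
    intro a b ha hb c hc
    have h1 := ha c hc
    have h2 := hb c hc
    simp only [Pi.add_apply, mul_add, Finset.sum_add_distrib, h1, h2, add_zero]
  zero_mem' := by
    intro c hc
    simp
  smul_mem' := by
    intro r v hv c hc
    have h1 := hv c hc
    simp only [Pi.smul_apply, smul_eq_mul]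
    rw [show ∑ i, c i * (r * v i) = r * ∑ i, c i * v i by
      rw [Finset.mul_sum]; exact Finset.sum_congr rfl fun i _ => by ring]
    rw [h1, mul_zero]

lemma mem_dualSubmodule {R : Type} [CommRing R] {n : ℕ} (C : Set (Fin n → R))
    (v : Fin n → R) : v ∈ dualSubmodule C ↔ v ∈ dualSet C := Iff.rfl

lemma sum_mul_single {R : Type} [CommRing R] {n : ℕ} (t : Fin n) (a : R) (w : Fin n → R) :
    ∑ s, w s * (Pi.single t a : Fin n → R) s = w t * a := by
  classical
  rw [Finset.sum_eq_single t]
  · rw [Pi.single_eq_same]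
  · intro b _ hb
    rw [Pi.single_eq_of_ne hb, mul_zero]
  · intro h
    exact absurd (Finset.mem_univ t) h

lemma cr_hard {R : Type} [CommRing R] [IsLocalRing R] (γ : R) (e : ℕ)
    (hmax : IsLocalRing.maximalIdeal R = Ideal.span {γ})
    (he : 0 < e) (hγe : γ ^ e = 0)
    (hγlt : ∀ k, 0 < k → k < e → γ ^ k ≠ 0)
    (lam : R) (hlam : ¬ IsUnit lam)
    (n : ℕ) (hn : 0 < n)
    (C : Submodule R (Fin n → R))
    (hCτ : ∀ v ∈ C, tauShift lam v ∈ C)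
    (μ : R)
    (hμ : ∀ v ∈ dualSet (C : Set (Fin n → R)), tauShift μ v ∈ dualSet (C : Set (Fin n → R))) :
    ∃ i ≤ e, (C : Set (Fin n → R)) = { v | ∀ t, v t ∈ Ideal.span {γ ^ i} } := by
  classical
  set z : Fin n := ⟨0, hn⟩ with hz
  set D := dualSubmodule (C : Set (Fin n → R)) with hD
  have hDmem : ∀ v, v ∈ D ↔ v ∈ dualSet (C : Set (Fin n → R)) := fun _ => Iff.rfl
  have sigma_mem : ∀ v, v ∈ D → sigmaShift lam v ∈ D := by
    intro v hv
    rw [hDmem] at hv ⊢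
    intro c hc
    rw [← pairing]
    exact hv _ (hCτ c hc)
  have tau_mem : ∀ v, v ∈ D → tauShift μ v ∈ D := by
    intro v hv
    rw [hDmem] at hv ⊢
    exact hμ v hv
  have step2 : ∀ v, v ∈ D → Pi.single z (v z) ∈ D := by
    intro v hv
    set w := tauShift μ (sigmaShift lam v) with hw
    have hwD : w ∈ D := tau_mem _ (sigma_mem _ hv)
    have hunit : IsUnit (μ * lam - 1) := by
      have h1 : μ * lam ∈ nonunits R := fun h => hlam (isUnit_of_mul_isUnit_right h)
      have h2 := (IsLocalRing.isUnit_one_sub_self_of_mem_nonunits _ h1).neg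
      simpa [neg_sub] using h2
    have heq : w - v = (μ * lam - 1) • (Pi.single z (v z) : Fin n → R) := by
      funext i
      by_cases hi : (i : ℕ) = 0
      · have hiz : i = z := Fin.ext (by simpa [hz] using hi)
        have hw1 : w i = μ * (lam * v z) := by
          rw [hw]
          simp only [tauShift, if_pos hi]
          congr 1
          simp only [sigmaShift]
          rw [dif_neg (by omega)]
        rw [Pi.sub_apply, hw1, hiz, Pi.smul_apply, Pi.single_eq_same, smul_eq_mul]
        ring
      · have hiz : i ≠ z := fun h => hi (by rw [h])
        have hw1 : w i = v i := by
          rw [hw]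
          simp only [tauShift]
          rw [if_neg hi]
          simp only [sigmaShift]
          rw [dif_pos (by have := i.isLt; omega : (i : ℕ) - 1 + 1 < n)]
          exact congrArg v (Fin.ext (by show (i : ℕ) - 1 + 1 = (i : ℕ); omega))
        rw [Pi.sub_apply, hw1, sub_self, Pi.smul_apply, Pi.single_eq_of_ne hiz, smul_zero]
    obtain ⟨g, hg⟩ := hunit
    have hfin : (Pi.single z (v z) : Fin n → R) = ((g⁻¹ : Rˣ) : R) • (w - v) := by
      rw [heq, ← hg, smul_smul, Units.inv_mul, one_smul]
    rw [hfin]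
    exact D.smul_mem _ (D.sub_mem hwD hv)
  have itermem : ∀ s (v : Fin n → R), v ∈ D → (sigmaShift lam)^[s] v ∈ D := by
    intro s
    induction s with
    | zero => intro v hv; simpa using hv
    | succ s ih =>
      intro v hv
      rw [Function.iterate_succ_apply']
      exact sigma_mem _ (ih v hv)
  have itercoord : ∀ s (v : Fin n → R) (j : ℕ) (hj : j + s < n),
      (sigmaShift lam)^[s] v ⟨j, by omega⟩ = v ⟨j + s, hj⟩ := by
    intro s
    induction s with
    | zero => intro v j hj; exact congrArg v (Fin.ext (by simp))
    | succ s ih =>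
      intro v j hj
      rw [Function.iterate_succ_apply']
      have h1 : sigmaShift lam ((sigmaShift lam)^[s] v) ⟨j, by omega⟩
          = ((sigmaShift lam)^[s] v) ⟨j + 1, by omega⟩ := by
        simp only [sigmaShift]
        rw [dif_pos (by omega : j + 1 < n)]
      rw [h1, ih v (j + 1) (by omega)]
      exact congrArg v (Fin.ext (by show j + 1 + s = j + (s + 1); omega))
  have coord_mem : ∀ v, v ∈ D → ∀ s : Fin n, Pi.single z (v s) ∈ D := by
    intro v hv s
    have h1 := step2 _ (itermem (s : ℕ) v hv)
    have h3 := itercoord (s : ℕ) v 0 (by simpa using s.isLt)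
    have h2 : (sigmaShift lam)^[(s : ℕ)] v z = v s :=
      h3.trans (congrArg v (Fin.ext (by simp)))
    rw [h2] at h1
    exact h1
  have spread : ∀ a : R, Pi.single z a ∈ D → ∀ t : Fin n, Pi.single t a ∈ D := by
    intro a ha
    have key : ∀ m (hm : m < n), Pi.single (⟨m, hm⟩ : Fin n) a ∈ D := by
      intro m
      induction m with
      | zero => intro hm; exact ha
      | succ m ih =>
        intro hm
        have hprev := ih (by omega)
        have htau := tau_mem _ hprev
        have heq2 : tauShift μ (Pi.single (⟨m, by omega⟩ : Fin n) a)
            = Pi.single (⟨m + 1, hm⟩ : Fin n) a := by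
          funext i
          by_cases hi : (i : ℕ) = 0
          · simp only [tauShift]
            rw [if_pos hi]
            rw [Pi.single_eq_of_ne (by
              intro hcon
              have := congrArg Fin.val hcon
              simp at this
              omega)]
            rw [mul_zero, Pi.single_eq_of_ne (by
              intro hcon
              have := congrArg Fin.val hcon
              simp [hi] at this)]
          · simp only [tauShift]
            rw [if_neg hi]
            by_cases hv : (i : ℕ) = m + 1
            · rw [show (⟨(i : ℕ) - 1, _⟩ : Fin n) = ⟨m, by omega⟩ from Fin.ext (by simp; omega),
                Pi.single_eq_same,
                show i = (⟨m + 1, hm⟩ : Fin n) from Fin.ext hv, Pi.single_eq_same]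
            · rw [Pi.single_eq_of_ne (by
                intro hcon
                have := congrArg Fin.val hcon
                simp at this
                omega),
                Pi.single_eq_of_ne (by
                intro hcon
                have := congrArg Fin.val hcon
                simp at this
                omega)]
        rw [← heq2]
        exact htau
    intro t
    exact key (t : ℕ) t.isLt
  set I : Ideal R :=
    Submodule.comap (LinearMap.toSpanSingleton R (Fin n → R) (Pi.single z 1)) D with hI
  have hsing : ∀ a : R, a • (Pi.single z (1 : R) : Fin n → R) = Pi.single z a := by
    intro a
    funext i
    by_cases h : i = z
    · subst h; simp
    · simp [Pi.single_eq_of_ne h]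
  have hImem : ∀ a : R, a ∈ I ↔ Pi.single z a ∈ D := by
    intro a
    rw [hI, Submodule.mem_comap, LinearMap.toSpanSingleton_apply, hsing]
  obtain ⟨j, hje, hIj⟩ := cr_ideal_class γ e hmax hγe I
  have dual_char : ∀ v, v ∈ dualSet (C : Set (Fin n → R)) ↔ ∀ s, v s ∈ Ideal.span {γ ^ j} := by
    intro v
    constructor
    · intro hv s
      rw [← hIj, hImem]
      exact coord_mem v ((hDmem v).2 hv) s
    · intro hv
      have hsum : (∑ t, Pi.single t (v t)) ∈ D :=
        Submodule.sum_mem D (fun t _ =>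
          spread (v t) ((hImem (v t)).1 (by rw [hIj]; exact hv t)) t)
      rw [Finset.univ_sum_single] at hsum
      exact (hDmem v).1 hsum
  refine ⟨e - j, by omega, ?_⟩
  ext x
  simp only [SetLike.mem_coe, Set.mem_setOf_eq]
  constructor
  · intro hx t
    have h1 : Pi.single t (γ ^ j) ∈ dualSet (C : Set (Fin n → R)) := by
      apply (dual_char _).2
      intro s
      rw [Pi.single_apply]
      split
      · exact Ideal.subset_span rfl
      · exact Submodule.zero_mem _
    have h3 : ∑ s, x s * (Pi.single t (γ ^ j) : Fin n → R) s = 0 := h1 x hx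
    rw [sum_mul_single] at h3
    exact (cr_ann γ e hmax hγe hγlt j hje (x t)).1 (by rw [mul_comm]; exact h3)
  · intro hx
    by_contra hxC
    obtain ⟨v, hv1, hv2⟩ := cr_separation γ e hmax he hγe hγlt C x hxC
    have hvD : v ∈ dualSet (C : Set (Fin n → R)) := fun c hc => hv1 c hc
    have hvs := (dual_char v).1 hvD
    apply hv2
    apply Finset.sum_eq_zero
    intro i _
    obtain ⟨a, ha⟩ := Ideal.mem_span_singleton'.1 (hx i)
    obtain ⟨b, hb⟩ := Ideal.mem_span_singleton'.1 (hvs i)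
    rw [← ha, ← hb]
    calc a * γ ^ (e - j) * (b * γ ^ j) = a * b * (γ ^ (e - j) * γ ^ j) := by ring
      _ = a * b * γ ^ e := by rw [← pow_add, show e - j + j = e by omega]
      _ = 0 := by rw [hγe, mul_zero]

lemma tau_mem_E {R : Type} [CommRing R] (γ : R) (k : ℕ) (μ : R) {n : ℕ}
    (v : Fin n → R) (hv : ∀ t, v t ∈ Ideal.span {γ ^ k}) :
    ∀ t, tauShift μ v t ∈ Ideal.span {γ ^ k} := by
  intro t
  unfold tauShift
  split
  · exact Ideal.mul_mem_left _ μ (hv _)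
  · exact hv _

lemma cr_part2 {R : Type} [CommRing R] [IsLocalRing R] (γ : R) (e : ℕ)
    (hmax : IsLocalRing.maximalIdeal R = Ideal.span {γ})
    (he : 0 < e) (hγe : γ ^ e = 0)
    (hγlt : ∀ k, 0 < k → k < e → γ ^ k ≠ 0)
    (n : ℕ) (hn : 0 < n)
    (C : Submodule R (Fin n → R))
    (i : ℕ) (hie : i ≤ e)
    (hC : (C : Set (Fin n → R)) = { v | ∀ t, v t ∈ Ideal.span {γ ^ i} }) :
    dualSet (C : Set (Fin n → R)) = { v | ∀ t, v t ∈ Ideal.span {γ ^ (e - i)} } ∧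
      ∀ μ : R,
        (∀ v ∈ C, tauShift μ v ∈ C) ∧
        (∀ v ∈ dualSet (C : Set (Fin n → R)),
          tauShift μ v ∈ dualSet (C : Set (Fin n → R))) := by
  classical
  have hCmem : ∀ x : Fin n → R, x ∈ C ↔ ∀ t, x t ∈ Ideal.span {γ ^ i} := by
    intro x
    constructor
    · intro hx; exact (Set.ext_iff.1 hC x).1 hx
    · intro hx; exact (Set.ext_iff.1 hC x).2 hx
  have hprod : ∀ x y : R, x ∈ Ideal.span {γ ^ i} → y ∈ Ideal.span {γ ^ (e - i)} →
      x * y = 0 := by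
    intro x y hx hy
    obtain ⟨a, ha⟩ := Ideal.mem_span_singleton'.1 hx
    obtain ⟨b, hb⟩ := Ideal.mem_span_singleton'.1 hy
    rw [← ha, ← hb]
    calc a * γ ^ i * (b * γ ^ (e - i)) = a * b * (γ ^ i * γ ^ (e - i)) := by ring
      _ = a * b * γ ^ e := by rw [← pow_add, show i + (e - i) = e by omega]
      _ = 0 := by rw [hγe, mul_zero]
  have hdual : dualSet (C : Set (Fin n → R)) = { v | ∀ t, v t ∈ Ideal.span {γ ^ (e - i)} } := by
    ext v
    constructor
    · intro hv t
      have h1 : (Pi.single t (γ ^ i) : Fin n → R) ∈ C := by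
        rw [hCmem]
        intro s
        rw [Pi.single_apply]
        split
        · exact Ideal.subset_span rfl
        · exact Submodule.zero_mem _
      have h3 : ∑ s, (Pi.single t (γ ^ i) : Fin n → R) s * v s = 0 := hv _ h1
      have h4 : ∑ s, v s * (Pi.single t (γ ^ i) : Fin n → R) s = 0 := by
        rw [← h3]
        exact Finset.sum_congr rfl fun s _ => mul_comm _ _
      rw [sum_mul_single] at h4
      exact (cr_ann γ e hmax hγe hγlt i hie (v t)).1 (by rw [mul_comm]; exact h4)
    · intro hv c hc
      apply Finset.sum_eq_zero
      intro s _
      exact hprod _ _ ((hCmem c).1 hc s) (hv s)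
  refine ⟨hdual, fun μ => ⟨?_, ?_⟩⟩
  · intro v hv
    rw [hCmem]
    exact tau_mem_E γ i μ v ((hCmem v).1 hv)
  · intro v hv
    have h1 : ∀ t, v t ∈ Ideal.span {γ ^ (e - i)} := by
      rw [hdual] at hv; exact hv
    have h2 := tau_mem_E γ (e - i) μ v h1
    rw [hdual]
    exact h2

/-- For an NIE-constacyclic code `C` over a finite chain ring,
`C^⊥` is `λ̂`-constacyclic for some `λ̂` iff `C = γ^i R^n` for some `0 ≤ i ≤ e`;
and in that case `C^⊥ = γ^{e−i} R^n`, and both `C` and `C^⊥` are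
`λ̂`-constacyclic for every `λ̂ ∈ R`. -/
theorem stmt_17 {R : Type} [CommRing R] [Fintype R] [IsLocalRing R]
    (γ : R) (e : ℕ)
    (hchain : ∀ I J : Ideal R, I ≤ J ∨ J ≤ I)
    (hmax : IsLocalRing.maximalIdeal R = Ideal.span {γ})
    (he : 0 < e) (hγe : γ ^ e = 0)
    (hγlt : ∀ k, 0 < k → k < e → γ ^ k ≠ 0)
    (lam : R) (hlam : ¬ IsUnit lam)
    (n : ℕ) (hn : 0 < n)
    (C : Submodule R (Fin n → R))
    (hCτ : ∀ v ∈ C, tauShift lam v ∈ C) :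
    ((∃ μ : R, ∀ v ∈ dualSet (C : Set (Fin n → R)),
        tauShift μ v ∈ dualSet (C : Set (Fin n → R))) ↔
      (∃ i ≤ e, (C : Set (Fin n → R)) =
        { v | ∀ t, v t ∈ Ideal.span {γ ^ i} })) ∧
    (∀ i ≤ e, (C : Set (Fin n → R)) = { v | ∀ t, v t ∈ Ideal.span {γ ^ i} } →
      (dualSet (C : Set (Fin n → R)) =
          { v | ∀ t, v t ∈ Ideal.span {γ ^ (e - i)} } ∧
        ∀ μ : R,
          (∀ v ∈ C, tauShift μ v ∈ C) ∧
          (∀ v ∈ dualSet (C : Set (Fin n → R)),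
            tauShift μ v ∈ dualSet (C : Set (Fin n → R))))) := by
  constructor
  · constructor
    · rintro ⟨μ, hμ⟩
      exact cr_hard γ e hmax he hγe hγlt lam hlam n hn C hCτ μ hμ
    · rintro ⟨i, hie, hC⟩
      exact ⟨0, ((cr_part2 γ e hmax he hγe hγlt n hn C i hie hC).2 0).2⟩
  · intro i hie hC
    exact cr_part2 γ e hmax he hγe hγlt n hn C i hie hC
end

section
/- Let C₀ be an MDS linear code of length n over a finite chain ring R₀ with d(C₀) = n + 1 − log_{|R₀|}|C₀|, let s ≥ 2, let 𝐑 = R₀ × ⋯ × R₀ (s factors), and let C ⊆ 𝐑^n be the code whose t-th component projections are C₀ for t = 1,…,s−1 and the zero code for t = s. If log_{|R₀|}|C₀| < s, then C achieves the maximum possible minimum Hamming distance among all linear codes of length n and cardinality |C₀|^{s−1} over 𝐑; namely d(C) = d(C₀), while the Singleton bound gives d(C′) ≤ d(C₀) + (1/s)·log_{|R₀|}|C₀| < d(C₀) + 1 for any such code C′. -/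
/-- The Hamming weight of a vector: the number of nonzero coordinates. -/
def hwt {α : Type} [DecidableEq α] [Zero α] {n : ℕ} (v : Fin n → α) : ℕ :=
  (Finset.univ.filter fun i => v i ≠ 0).card

lemma hwt_eq_zero_iff {α : Type} [DecidableEq α] [Zero α] {n : ℕ} (v : Fin n → α) :
    hwt v = 0 ↔ v = 0 := by
  simp [hwt, Finset.filter_eq_empty_iff, Finset.card_eq_zero, funext_iff]

/-- Let `C₀` be an MDS linear code of length `n` over a finite
chain ring `R₀` with `|C₀| = |R₀|^k` and minimum distance `n + 1 − k`, let
`s ≥ 2` with `k < s`, and let `C ⊆ (R₀^s)^n` consist of the vectors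
`(c, …, c, 0)` (componentwise) for `c ∈ C₀`.  Then `d(C) = d(C₀) = n + 1 − k`,
and every linear code over the product ring `𝐑 = R₀^s` of length `n` and
cardinality `|C₀|^{s−1}` has minimum Hamming distance at most `n + 1 − k`:
`C` is optimal for its length and cardinality. -/
theorem stmt_19 {R₀ : Type} [CommRing R₀] [Fintype R₀] [DecidableEq R₀]
    (hchain : ∀ I J : Ideal R₀, I ≤ J ∨ J ≤ I)
    (n k s : ℕ) (hs : 2 ≤ s) (hks : k < s)
    (C₀ : Submodule R₀ (Fin n → R₀))
    (hcard : Nat.card C₀ = Nat.card R₀ ^ k)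
    (hd_ex : ∃ c ∈ C₀, c ≠ 0 ∧ hwt c = n + 1 - k)
    (hd_min : ∀ c ∈ C₀, c ≠ 0 → n + 1 - k ≤ hwt c)
    (C : Set (Fin n → Fin s → R₀))
    (hC : C = { v | ∃ c ∈ C₀,
      v = fun i (t : Fin s) => if (t : ℕ) = s - 1 then 0 else c i }) :
    (∃ v ∈ C, v ≠ 0 ∧ hwt v = n + 1 - k) ∧
    (∀ v ∈ C, v ≠ 0 → n + 1 - k ≤ hwt v) ∧
    (∀ C' : Submodule (Fin s → R₀) (Fin n → Fin s → R₀),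
      Nat.card C' = Nat.card C₀ ^ (s - 1) →
      ∃ v ∈ C', v ≠ 0 ∧ hwt v ≤ n + 1 - k) := by
  -- basic numeric facts
  obtain ⟨c0, hc0, hc0ne, hc0w⟩ := hd_ex
  have hc0w1 : 1 ≤ hwt c0 := by
    rcases Nat.eq_zero_or_pos (hwt c0) with h | h
    · exact absurd ((hwt_eq_zero_iff c0).mp h) hc0ne
    · exact h
  have hkn : k ≤ n := by omega
  obtain ⟨i0, hi0⟩ : ∃ i, c0 i ≠ 0 := by
    by_contra h; push_neg at h; exact hc0ne (funext h)
  have hR : 2 ≤ Nat.card R₀ := by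
    rw [Nat.card_eq_fintype_card]
    exact Fintype.one_lt_card_iff.mpr ⟨c0 i0, 0, hi0⟩
  have hk : 1 ≤ k := by
    by_contra h
    have hk0 : k = 0 := by omega
    subst hk0
    simp only [pow_zero] at hcard
    have : 1 < Nat.card C₀ :=
      Finite.one_lt_card_iff_nontrivial.mpr ⟨⟨c0, hc0⟩, 0, by simp [hc0ne, Subtype.ext_iff]⟩
    omega
  -- weight preservation under the embedding
  have hkey : ∀ c : Fin n → R₀,
      hwt (fun i (t : Fin s) => if (t : ℕ) = s - 1 then 0 else c i) = hwt c := by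
    intro c
    unfold hwt
    congr 1
    ext i
    simp only [Finset.mem_filter, Finset.mem_univ, true_and]
    constructor
    · intro h h0
      exact h (by funext t; simp [h0])
    · intro h h0
      apply h
      have h1 := congrFun h0 ⟨0, by omega⟩
      simpa [show ¬ ((0 : ℕ) = s - 1) by omega] using h1
  refine ⟨?_, ?_, ?_⟩
  · refine ⟨fun i (t : Fin s) => if (t : ℕ) = s - 1 then 0 else c0 i,
      by rw [hC]; exact ⟨c0, hc0, rfl⟩, ?_, by rw [hkey]; exact hc0w⟩
    intro h0
    have : hwt (fun i (t : Fin s) => if (t : ℕ) = s - 1 then 0 else c0 i) = 0 :=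
      (hwt_eq_zero_iff _).mpr h0
    rw [hkey, hc0w] at this
    omega
  · intro v hv hvne
    rw [hC] at hv
    obtain ⟨c, hc, rfl⟩ := hv
    rw [hkey]
    apply hd_min c hc
    intro hcz
    exact hvne (by subst hcz; funext i t; simp)
  · intro C' hC'
    by_contra hcon
    push_neg at hcon
    -- every nonzero codeword has weight > n+1-k
    -- projection onto the first k-1 coordinates is injective
    set f : C' → (Fin (k - 1) → Fin s → R₀) :=
      fun v j => v.1 ⟨j.1, lt_of_lt_of_le j.isLt (by omega)⟩ with hf
    have hinj : Function.Injective f := by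
      intro v1 v2 heq
      have hmem : (v1 : Fin n → Fin s → R₀) - v2.1 ∈ C' := sub_mem v1.2 v2.2
      set w : Fin n → Fin s → R₀ := (v1 : Fin n → Fin s → R₀) - v2.1 with hw
      have hzero : ∀ i : Fin n, (i : ℕ) < k - 1 → w i = 0 := by
        intro i hi
        have h1 := congrFun heq ⟨i.1, hi⟩
        simp only [hf] at h1
        have h2 : (⟨i.1, _⟩ : Fin n) = i := rfl
        rw [hw]
        simp only [Pi.sub_apply]
        rw [sub_eq_zero]
        exact h1
      have hwz : w = 0 := by
        by_contra hwne
        have hgt := hcon w hmem hwne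
        have hsub : (Finset.univ.filter fun i => w i ≠ 0) ⊆
            Finset.univ.filter fun i : Fin n => ¬ (i : ℕ) < k - 1 := by
          intro i hi
          simp only [Finset.mem_filter, Finset.mem_univ, true_and] at hi ⊢
          intro hlt
          exact hi (hzero i hlt)
        have hle : hwt w ≤ (Finset.univ.filter fun i : Fin n => ¬ (i : ℕ) < k - 1).card :=
          Finset.card_le_card hsub
        have hflt : (Finset.univ.filter fun i : Fin n => (i : ℕ) < k - 1).card = k - 1 := by
          have heq2 : (Finset.univ.filter fun i : Fin n => (i : ℕ) < k - 1) =
              Finset.Iio (⟨k - 1, by omega⟩ : Fin n) := by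
            ext i
            simp [Fin.lt_def]
          rw [heq2, Fin.card_Iio]
        have hcard3 : (Finset.univ.filter fun i : Fin n => ¬ (i : ℕ) < k - 1).card
            = n - (k - 1) := by
          rw [Finset.filter_not, Finset.card_sdiff_of_subset (Finset.filter_subset _ _), hflt]
          simp
        rw [hcard3] at hle
        omega
      have : (v1 : Fin n → Fin s → R₀) = v2.1 := by
        rwa [hw, sub_eq_zero] at hwz
      exact Subtype.ext this
    have hle2 : Nat.card C' ≤ Nat.card (Fin (k - 1) → Fin s → R₀) :=
      Nat.card_le_card_of_injective f hinj
    have hrhs : Nat.card (Fin (k - 1) → Fin s → R₀) = Nat.card R₀ ^ (s * (k - 1)) := by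
      simp only [Nat.card_eq_fintype_card, Fintype.card_fun, Fintype.card_fin]
      rw [← pow_mul, mul_comm]
    have hlhs : Nat.card C' = Nat.card R₀ ^ (k * (s - 1)) := by
      rw [hC', hcard, ← pow_mul]
    rw [hlhs, hrhs] at hle2
    have hexp : s * (k - 1) < k * (s - 1) := by
      obtain ⟨k', rfl⟩ : ∃ k', k = k' + 1 := ⟨k - 1, by omega⟩
      obtain ⟨s', rfl⟩ : ∃ s', s = s' + 1 := ⟨s - 1, by omega⟩
      simp only [Nat.add_sub_cancel]
      have : k' < s' := by omega
      nlinarith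
    have := Nat.pow_lt_pow_right (by omega : 1 < Nat.card R₀) hexp
    omega
end
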